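/- arXiv:1003.4668 — 5 statements merged into one kernel-verified Lean document; each statement's English description precedes it below -/
import Mathlib

section
/- In the quasi-ordinary setup below, assume ∑_{i=1}^{m_1} a_{11i} < 1. Then Λ ⊆ {η = 0}: every point ℓ ∈ Λ has homogeneous coordinate η equal to 0. -/
open Filter Topology

noncomputable section

/-- The monomial `M_k(t) = ∏ t_{ij}^{b_{kij}}`. -/
def qoMonom {g : ℕ} (m : Fin g → ℕ) (b : Fin g → ((k : Fin g) × Fin (m k)) → ℕ)
    (k : Fin g) (t : ((k : Fin g) × Fin (m k)) → ℂ) : ℂ :=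
  ∏ p : (k : Fin g) × Fin (m k), t p ^ b k p

/-- `φ(t) = ∑ M_k(t) f_k(t)`. -/
def qoPhi {g : ℕ} (m : Fin g → ℕ) (b : Fin g → ((k : Fin g) × Fin (m k)) → ℕ)
    (f : Fin g → (((k : Fin g) × Fin (m k)) → ℂ) → ℂ)
    (t : ((k : Fin g) × Fin (m k)) → ℂ) : ℂ :=
  ∑ k, qoMonom m b k t * f k t

/-- `ξ_{kj}(t) = (∂φ/∂t_{kj})(t) / (c_{kj} t_{kj}^{c_{kj}-1})`. -/
def qoXi {g : ℕ} (m : Fin g → ℕ) (b : Fin g → ((k : Fin g) × Fin (m k)) → ℕ)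
    (c : ((k : Fin g) × Fin (m k)) → ℕ)
    (f : Fin g → (((k : Fin g) × Fin (m k)) → ℂ) → ℂ)
    (t : ((k : Fin g) × Fin (m k)) → ℂ) (p : (k : Fin g) × Fin (m k)) : ℂ :=
  fderiv ℂ (qoPhi m b f) t (Pi.single p 1) / ((c p : ℂ) * t p ^ (c p - 1))

lemma qoVec_ne {g : ℕ} {m : Fin g → ℕ} (v : ((k : Fin g) × Fin (m k)) → ℂ) :
    ((v, (-1 : ℂ)) : (((k : Fin g) × Fin (m k)) → ℂ) × ℂ) ≠ 0 := by
  simp [Prod.ext_iff]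

instance {K V : Type*} [DivisionRing K] [AddCommGroup V] [Module K V] [TopologicalSpace V] :
    TopologicalSpace (Projectivization K V) :=
  inferInstanceAs (TopologicalSpace (Quotient (projectivizationSetoid K V)))

/-- The projectivized tangent map `G`. -/
def qoG {g : ℕ} (m : Fin g → ℕ) (b : Fin g → ((k : Fin g) × Fin (m k)) → ℕ)
    (c : ((k : Fin g) × Fin (m k)) → ℕ)
    (f : Fin g → (((k : Fin g) × Fin (m k)) → ℂ) → ℂ)
    (t : ((k : Fin g) × Fin (m k)) → ℂ) :
    Projectivization ℂ ((((k : Fin g) × Fin (m k)) → ℂ) × ℂ) :=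
  Projectivization.mk ℂ (fun p => qoXi m b c f t p, -1) (qoVec_ne _)

/-- The set of limits of tangents `Λ`. -/
def qoLambda {g : ℕ} (m : Fin g → ℕ) (b : Fin g → ((k : Fin g) × Fin (m k)) → ℕ)
    (c : ((k : Fin g) × Fin (m k)) → ℕ)
    (f : Fin g → (((k : Fin g) × Fin (m k)) → ℂ) → ℂ) :
    Set (Projectivization ℂ ((((k : Fin g) × Fin (m k)) → ℂ) × ℂ)) :=
  {ℓ | ∃ t : ℕ → ((k : Fin g) × Fin (m k)) → ℂ,
    (∀ n p, t n p ≠ 0) ∧ Tendsto t atTop (𝓝 0) ∧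
    Tendsto (fun n => qoG m b c f (t n)) atTop (𝓝 ℓ)}

/-- The exponent `a_{kij} = b_{kij}/c_{ij}`. -/
def qoExp {g : ℕ} (m : Fin g → ℕ) (b : Fin g → ((k : Fin g) × Fin (m k)) → ℕ)
    (c : ((k : Fin g) × Fin (m k)) → ℕ)
    (k : Fin g) (p : (k : Fin g) × Fin (m k)) : ℚ :=
  (b k p : ℚ) / (c p : ℚ)

/-!
Near `0` write `φ = M · u`, where `M = ∏_j t_{1j}^{b_{11j}}` is the first monomial and `u` is a
unit with `u(0) = f_1(0)`. Euler's identity for `M` gives `t_p ∂_p φ = M (b_{1p} u + t_p ∂_p u)`,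
so `|ξ_{1j}| ≳ |M| / |t_{1j}|^{c_{1j}}`. Raising these bounds to the powers `a_{11j}` and
multiplying, the `t_{1j}` recombine into `M`: `‖ξ‖ ^ A ≳ |M| ^ (A - 1)` with
`A = ∑_j a_{11j} < 1`. Hence `‖ξ‖ → ∞` as `t → 0`, which forces `η = 0` at every limit of
`G(t) = [ξ : -1]`.
-/

theorem tendsto_atTop_of_mul_rpow_le_mul_rpow {α : Type*} {l : Filter α} {μ S : α → ℝ}
    {K A : ℝ} (hK : 0 < K) (hA0 : 0 < A) (hA1 : A < 1) (hμ : Tendsto μ l (𝓝[>] 0))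
    (hS : ∀ᶠ a in l, 0 < S a) (h : ∀ᶠ a in l, K * μ a ^ A ≤ μ a * S a ^ A) :
    Tendsto S l atTop := by
  have hμpos : ∀ᶠ a in l, 0 < μ a := hμ.eventually self_mem_nhdsWithin
  have hμA : Tendsto (fun a => K * μ a ^ (A - 1)) l atTop := by
    refine Tendsto.const_mul_atTop hK (((tendsto_rpow_atTop (by linarith : 0 < 1 - A)).comp
      hμ.inv_tendsto_nhdsGT_zero).congr' ?_)
    filter_upwards [hμpos] with a ha
    simp only [Function.comp_apply, Pi.inv_apply]
    rw [Real.inv_rpow ha.le, ← Real.rpow_neg ha.le, neg_sub]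
  have hSA : Tendsto (fun a => S a ^ A) l atTop := by
    refine tendsto_atTop_mono' l ?_ hμA
    filter_upwards [h, hμpos] with a ha hpos
    rw [Real.rpow_sub hpos, Real.rpow_one, ← mul_div_assoc, div_le_iff₀ hpos]
    linarith
  refine ((tendsto_rpow_atTop (inv_pos.mpr hA0)).comp hSA).congr' ?_
  filter_upwards [hS] with a ha
  rw [Function.comp_apply, Real.rpow_rpow_inv ha.le hA0.ne']

theorem prod_rpow_mul_prod_pow_rpow_le {ι : Type*} [Fintype ι] {r : ι → ℝ} {e c : ι → ℕ}
    {κ S : ℝ} (hr : ∀ p, 0 < r p) (hc : ∀ p, 0 < c p) (hκ : 0 ≤ κ) (hS : 0 < S)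
    (h : ∀ p, κ * e p * ∏ q, r q ^ e q ≤ S * c p * r p ^ c p) :
    (∏ p, (κ * e p / c p) ^ ((e p : ℝ) / c p)) * (∏ q, r q ^ e q) ^ ∑ p, ((e p : ℝ) / c p) ≤
      (∏ q, r q ^ e q) * S ^ ∑ p, ((e p : ℝ) / c p) := by
  set μ := ∏ q, r q ^ e q
  have hμ : 0 < μ := Finset.prod_pos fun q _ => pow_pos (hr q) _
  have hfactor (p : ι) :
      (κ * e p / c p) ^ ((e p : ℝ) / c p) * (μ / S) ^ ((e p : ℝ) / c p) ≤ r p ^ e p := by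
    have hcp : (0 : ℝ) < c p := by exact_mod_cast hc p
    rw [← Real.mul_rpow (by positivity) (by positivity)]
    calc (κ * e p / c p * (μ / S)) ^ ((e p : ℝ) / c p)
        ≤ (r p ^ c p) ^ ((e p : ℝ) / c p) := by
          refine Real.rpow_le_rpow (by positivity) ?_ (by positivity)
          rw [div_mul_div_comm, div_le_iff₀ (by positivity)]
          linarith [h p]
      _ = r p ^ e p := by
          rw [← Real.rpow_natCast, ← Real.rpow_mul (hr p).le, mul_div_cancel₀ _ hcp.ne',
            Real.rpow_natCast]
  calc _ = (∏ p, (κ * e p / c p) ^ ((e p : ℝ) / c p) * (μ / S) ^ ((e p : ℝ) / c p)) *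
        S ^ ∑ p, ((e p : ℝ) / c p) := by
        rw [Finset.prod_mul_distrib, ← Real.rpow_sum_of_pos (div_pos hμ hS),
          Real.div_rpow hμ.le hS.le]
        field_simp
    _ ≤ μ * S ^ ∑ p, ((e p : ℝ) / c p) := by
        gcongr
        exact Finset.prod_le_prod (fun p _ => by positivity) fun p _ => hfactor p

theorem tendsto_atTop_of_mul_prod_pow_le {ι α : Type*} [Fintype ι] {l : Filter α}
    {r : α → ι → ℝ} {S : α → ℝ} {e c : ι → ℕ} {κ : ℝ} (hκ : 0 < κ) (hc : ∀ p, 0 < c p)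
    (he : ∃ p, e p ≠ 0) (hsum : ∑ p, ((e p : ℝ) / c p) < 1) (hr0 : Tendsto r l (𝓝 0))
    (hr : ∀ᶠ a in l, ∀ p, 0 < r a p)
    (h : ∀ᶠ a in l, ∀ p, κ * e p * ∏ q, r a q ^ e q ≤ S a * c p * r a p ^ c p) :
    Tendsto S l atTop := by
  obtain ⟨p₀, hp₀⟩ := he
  have hμ : Tendsto (fun a => ∏ q, r a q ^ e q) l (𝓝[>] 0) := by
    refine tendsto_nhdsWithin_iff.mpr
      ⟨?_, hr.mono fun a ha => Finset.prod_pos fun q _ => pow_pos (ha q) _⟩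
    have hcont : Continuous fun x : ι → ℝ => ∏ q, x q ^ e q := by fun_prop
    have h0 : (fun x : ι → ℝ => ∏ q, x q ^ e q) 0 = 0 :=
      Finset.prod_eq_zero (Finset.mem_univ p₀) (by simp [hp₀])
    exact h0 ▸ (hcont.tendsto 0).comp hr0
  have hS : ∀ᶠ a in l, 0 < S a := by
    filter_upwards [hr, h] with a ha hle
    have hlhs : 0 < κ * e p₀ * ∏ q, r a q ^ e q :=
      mul_pos (mul_pos hκ (Nat.cast_pos.mpr (Nat.pos_of_ne_zero hp₀)))
        (Finset.prod_pos fun q _ => pow_pos (ha q) _)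
    have : 0 < S a * (c p₀ * r a p₀ ^ c p₀) := by rw [← mul_assoc]; linarith [hle p₀]
    exact pos_of_mul_pos_left this (by have := ha p₀; positivity)
  have hsum0 : 0 < ∑ p, ((e p : ℝ) / c p) := by
    have := Nat.pos_of_ne_zero hp₀
    have := hc p₀
    exact Finset.sum_pos' (fun p _ => by positivity) ⟨p₀, Finset.mem_univ _, by positivity⟩
  refine tendsto_atTop_of_mul_rpow_le_mul_rpow
    (K := ∏ p, (κ * e p / c p) ^ ((e p : ℝ) / c p)) ?_ hsum0 hsum hμ hS ?_
  · refine Finset.prod_pos fun p _ => ?_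
    rcases (e p).eq_zero_or_pos with h0 | h0
    · simp [h0] -- `0 ^ 0 = 1` for `Real.rpow`
    · have := hc p
      positivity
  · filter_upwards [hr, h, hS] with a ha hle hSa
    exact prod_rpow_mul_prod_pow_rpow_le ha hc hκ.le hSa hle

theorem norm_fst_add_norm_snd_pos {E F : Type*} [NormedAddCommGroup E] [NormedAddCommGroup F]
    {v : E × F} (hv : v ≠ 0) : 0 < ‖v.1‖ + ‖v.2‖ := by
  by_contra! h
  have h1 : v.1 = 0 := norm_le_zero_iff.mp (by linarith [norm_nonneg v.2])
  have h2 : v.2 = 0 := norm_le_zero_iff.mp (by linarith [norm_nonneg v.1])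
  exact hv (Prod.ext h1 h2)

namespace Projectivization

variable {𝕜 W : Type*} [NormedField 𝕜] [NormedAddCommGroup W] [NormedSpace 𝕜 W]

def lastCoordWeight : Projectivization 𝕜 (W × 𝕜) → ℝ :=
  Projectivization.lift (fun v => ‖v.1.2‖ / (‖v.1.1‖ + ‖v.1.2‖)) fun v w a h => by
    have ha : a ≠ 0 := by rintro rfl; exact v.2 (by simp [h])
    simp only [h, Prod.smul_fst, Prod.smul_snd, norm_smul, ← mul_add]
    exact mul_div_mul_left _ _ (norm_ne_zero_iff.mpr ha)

theorem lastCoordWeight_mk (v : W × 𝕜) (hv : v ≠ 0) :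
    lastCoordWeight (mk 𝕜 v hv) = ‖v.2‖ / (‖v.1‖ + ‖v.2‖) := rfl

theorem continuous_lastCoordWeight : Continuous (lastCoordWeight (𝕜 := 𝕜) (W := W)) :=
  Continuous.quotient_lift
    ((by fun_prop : Continuous fun v : {v : W × 𝕜 // v ≠ 0} => ‖v.1.2‖).div (by fun_prop)
      fun v => (norm_fst_add_norm_snd_pos v.2).ne') _

theorem rep_snd_eq_zero_of_lastCoordWeight_eq_zero {ℓ : Projectivization 𝕜 (W × 𝕜)}
    (h : lastCoordWeight ℓ = 0) : ℓ.rep.2 = 0 := by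
  rw [← mk_rep ℓ, lastCoordWeight_mk, div_eq_zero_iff] at h
  exact norm_eq_zero.mp (h.resolve_right (norm_fst_add_norm_snd_pos ℓ.rep_nonzero).ne')

theorem rep_snd_eq_zero_of_tendsto_mk {α : Type*} {l : Filter α} [l.NeBot] {v : α → W}
    (hv : Tendsto (fun a => ‖v a‖) l atTop) {c : 𝕜} (hc : c ≠ 0)
    {ℓ : Projectivization 𝕜 (W × 𝕜)}
    (hℓ : Tendsto (fun a => mk 𝕜 (v a, c) (by simp [hc])) l (𝓝 ℓ)) : ℓ.rep.2 = 0 := by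
  refine rep_snd_eq_zero_of_lastCoordWeight_eq_zero (tendsto_nhds_unique
    ((continuous_lastCoordWeight.tendsto ℓ).comp hℓ) ?_)
  simp only [Function.comp_def, lastCoordWeight_mk]
  exact tendsto_const_nhds.div_atTop (tendsto_atTop_add_const_right _ _ hv)

end Projectivization

section Monomial

variable {𝕜 ι : Type*} [RCLike 𝕜] [Fintype ι] [DecidableEq ι]

theorem mul_fderiv_prod_pow_apply_single (e : ι → ℕ) (t : ι → 𝕜) (p : ι) :
    t p * fderiv 𝕜 (fun t : ι → 𝕜 => ∏ q, t q ^ e q) t (Pi.single p 1) =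
      e p * ∏ q, t q ^ e q := by
  have hpow (i : ι) (_ : i ∈ Finset.univ) := (hasFDerivAt_apply (𝕜 := 𝕜) i t).pow (e i)
  rw [(HasFDerivAt.finsetProd hpow).fderiv, sum_apply,
    Finset.sum_eq_single p (fun q _ hq => by simp [hq]) (by simp),
    ← Finset.mul_prod_erase _ _ (Finset.mem_univ p)]
  rcases (e p).eq_zero_or_pos with h | h
  · simp [h]
  · simp only [FunLike.coe_smul, Pi.smul_apply, ContinuousLinearMap.proj_apply,
      Pi.single_eq_same, smul_eq_mul, mul_one, nsmul_eq_mul]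
    rw [← pow_sub_one_mul h.ne']
    ring

theorem mul_fderiv_prod_pow_mul_apply_single (e : ι → ℕ) {u : (ι → 𝕜) → 𝕜} {t : ι → 𝕜}
    (hu : DifferentiableAt 𝕜 u t) (p : ι) :
    t p * fderiv 𝕜 (fun t => (∏ q, t q ^ e q) * u t) t (Pi.single p 1) =
      (∏ q, t q ^ e q) * (e p * u t + t p * fderiv 𝕜 u t (Pi.single p 1)) := by
  have hM : DifferentiableAt 𝕜 (fun t : ι → 𝕜 => ∏ q, t q ^ e q) t := by fun_prop
  rw [fderiv_fun_mul hM hu]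
  simp only [FunLike.coe_add, FunLike.coe_smul, Pi.add_apply, Pi.smul_apply, smul_eq_mul]
  linear_combination u t * mul_fderiv_prod_pow_apply_single e t p

theorem eventually_le_norm_mul_fderiv_prod_pow_mul (e : ι → ℕ) {u : (ι → 𝕜) → 𝕜}
    (hu : AnalyticAt 𝕜 u 0) :
    ∀ᶠ t in 𝓝 0, ∀ p, ‖u 0‖ / 2 * e p * ‖∏ q, t q ^ e q‖ ≤
      ‖t p * fderiv 𝕜 (fun t => (∏ q, t q ^ e q) * u t) t (Pi.single p 1)‖ := by
  have hlim (p : ι) : Tendsto (fun t => ‖e p * u t + t p * fderiv 𝕜 u t (Pi.single p 1)‖)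
      (𝓝 0) (𝓝 ‖(e p : 𝕜) * u 0‖) := by
    have hDu : ContinuousAt (fun t => fderiv 𝕜 u t (Pi.single p 1)) 0 :=
      hu.fderiv.continuousAt.clm_apply continuousAt_const
    have htp : Tendsto (fun t : ι → 𝕜 => t p) (𝓝 0) (𝓝 0) := (continuous_apply p).tendsto' _ _ rfl
    simpa using ((hu.continuousAt.tendsto.const_mul (e p : 𝕜)).add (htp.mul hDu.tendsto)).norm
  have hbound (p : ι) : ∀ᶠ t in 𝓝 0,
      ‖u 0‖ / 2 * e p ≤ ‖e p * u t + t p * fderiv 𝕜 u t (Pi.single p 1)‖ := by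
    rcases (by positivity : 0 ≤ ‖u 0‖ / 2 * e p).eq_or_lt with h | h
    · exact Eventually.of_forall fun t => h ▸ norm_nonneg _
    · refine (hlim p).eventually (eventually_ge_nhds ?_)
      rw [norm_mul, RCLike.norm_natCast]
      linarith
  filter_upwards [hu.eventually_analyticAt, eventually_all.mpr hbound] with t ht hp p
  rw [mul_fderiv_prod_pow_mul_apply_single e ht.differentiableAt, norm_mul]
  exact (mul_le_mul_of_nonneg_right (hp p) (norm_nonneg _)).trans_eq (mul_comm _ _)

theorem norm_mul_eq_norm_div_mul {x y : 𝕜} {n : ℕ} (hx : x ≠ 0) (hn : 0 < n) :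
    ‖x * y‖ = ‖y / (n * x ^ (n - 1))‖ * n * ‖x‖ ^ n := by
  obtain ⟨k, rfl⟩ := Nat.exists_eq_add_of_lt hn
  have : ‖x‖ ≠ 0 := norm_ne_zero_iff.mpr hx
  simp only [zero_add, add_tsub_cancel_right, norm_div, norm_mul, norm_pow, RCLike.norm_natCast]
  field_simp
  ring

theorem tendsto_norm_fderiv_prod_pow_mul_div {e c : ι → ℕ} {u : (ι → 𝕜) → 𝕜}
    (hu : AnalyticAt 𝕜 u 0) (hu0 : u 0 ≠ 0) (hc : ∀ p, 0 < c p) (he : ∃ p, e p ≠ 0)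
    (hsum : ∑ p, ((e p : ℝ) / c p) < 1) :
    Tendsto (fun t => ‖fun p => fderiv 𝕜 (fun t => (∏ q, t q ^ e q) * u t) t (Pi.single p 1) /
      (c p * t p ^ (c p - 1))‖) (𝓝[{t | ∀ p, t p ≠ 0}] 0) atTop := by
  refine tendsto_atTop_of_mul_prod_pow_le (r := fun t p => ‖t p‖) (κ := ‖u 0‖ / 2) (by positivity)
    hc he hsum ?_ (eventually_nhdsWithin_of_forall fun t ht p => norm_pos_iff.mpr (ht p)) ?_
  · exact tendsto_pi_nhds.mpr fun p =>
      ((continuous_apply p).norm.tendsto' 0 0 (by simp)).mono_left nhdsWithin_le_nhds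
  · filter_upwards [self_mem_nhdsWithin,
      nhdsWithin_le_nhds (eventually_le_norm_mul_fderiv_prod_pow_mul e hu)] with t ht hle p
    calc ‖u 0‖ / 2 * e p * ∏ q, ‖t q‖ ^ e q
        = ‖u 0‖ / 2 * e p * ‖∏ q, t q ^ e q‖ := by simp only [norm_prod, norm_pow]
      _ ≤ ‖t p * fderiv 𝕜 (fun t => (∏ q, t q ^ e q) * u t) t (Pi.single p 1)‖ := hle p
      _ = _ := norm_mul_eq_norm_div_mul (ht p) (hc p)
      _ ≤ _ := by
        gcongr
        exact norm_le_pi_norm (fun p => fderiv 𝕜 (fun t => (∏ q, t q ^ e q) * u t) t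
          (Pi.single p 1) / (c p * t p ^ (c p - 1))) p

end Monomial

section QuasiOrdinary

variable {g : ℕ}

/-- The cofactor of `M_{k₀}` in `φ`; the truncated exponents `b k - b k₀` are exact once
`b k₀ ≤ b k`. -/
def qoUnit (m : Fin g → ℕ) (b : Fin g → ((k : Fin g) × Fin (m k)) → ℕ)
    (f : Fin g → (((k : Fin g) × Fin (m k)) → ℂ) → ℂ) (k₀ : Fin g)
    (t : ((k : Fin g) × Fin (m k)) → ℂ) : ℂ :=
  ∑ k, (∏ q, t q ^ (b k q - b k₀ q)) * f k t

variable {m : Fin g → ℕ} {b : Fin g → ((k : Fin g) × Fin (m k)) → ℕ}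
  {f : Fin g → (((k : Fin g) × Fin (m k)) → ℂ) → ℂ}

theorem qoPhi_eq_qoMonom_mul_qoUnit {k₀ : Fin g} (hb : ∀ k, b k₀ ≤ b k) :
    qoPhi m b f = fun t => qoMonom m b k₀ t * qoUnit m b f k₀ t := by
  ext t
  simp only [qoPhi, qoUnit, qoMonom, Finset.mul_sum, ← mul_assoc, ← Finset.prod_mul_distrib,
    ← pow_add, fun k q => Nat.add_sub_cancel' (hb k q)]

theorem analyticAt_qoUnit {x : ((k : Fin g) × Fin (m k)) → ℂ} (hf : ∀ k, AnalyticAt ℂ (f k) x)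
    (k₀ : Fin g) : AnalyticAt ℂ (qoUnit m b f k₀) x := by
  refine Finset.analyticAt_fun_sum _ fun k _ => .mul ?_ (hf k)
  exact Finset.analyticAt_fun_prod _ fun q _ =>
    ((ContinuousLinearMap.proj (R := ℂ) (φ := fun _ => ℂ) q).analyticAt x).fun_pow _

theorem qoUnit_zero (hm : ∀ k, 0 < m k) {k₀ : Fin g}
    (hbpos : ∀ k (p : (k : Fin g) × Fin (m k)), p.1 ≤ k → 0 < b k p)
    (hbzero : ∀ k (p : (k : Fin g) × Fin (m k)), k < p.1 → b k p = 0) (hk₀ : ∀ k, k₀ ≤ k) :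
    qoUnit m b f k₀ 0 = f k₀ 0 := by
  refine (Finset.sum_eq_single k₀ (fun k _ hk => ?_) (by simp)).trans (by simp)
  have hlt : k₀ < k := (hk₀ k).lt_of_ne' hk
  refine mul_eq_zero_of_left (Finset.prod_eq_zero (Finset.mem_univ ⟨k, ⟨0, hm k⟩⟩) ?_) _
  simpa [hbzero k₀ ⟨k, ⟨0, hm k⟩⟩ hlt] using (hbpos k ⟨k, ⟨0, hm k⟩⟩ le_rfl).ne'

theorem sum_div_eq_sum_qoExp (c : ((k : Fin g) × Fin (m k)) → ℕ) {k₀ : Fin g}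
    (hbzero : ∀ k (p : (k : Fin g) × Fin (m k)), k < p.1 → b k p = 0) (hk₀ : ∀ k, k₀ ≤ k) :
    ∑ p, ((b k₀ p : ℝ) / c p) = ∑ j : Fin (m k₀), (qoExp m b c k₀ ⟨k₀, j⟩ : ℝ) := by
  rw [← Finset.univ_sigma_univ, Finset.sum_sigma, Finset.sum_eq_single k₀ (fun k _ hk => ?_)
    (by simp)]
  · simp [qoExp]
  · exact Finset.sum_eq_zero fun j _ => by simp [hbzero k₀ ⟨k, j⟩ ((hk₀ k).lt_of_ne' hk)]

theorem tendsto_norm_qoXi (hm : ∀ k, 0 < m k) {c : ((k : Fin g) × Fin (m k)) → ℕ}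
    (hc : ∀ p, 0 < c p) (hbpos : ∀ k (p : (k : Fin g) × Fin (m k)), p.1 ≤ k → 0 < b k p)
    (hbzero : ∀ k (p : (k : Fin g) × Fin (m k)), k < p.1 → b k p = 0)
    (hbmono : ∀ k k' (p : (k : Fin g) × Fin (m k)), k ≤ k' → b k p ≤ b k' p)
    (hf : ∀ k, AnalyticAt ℂ (f k) 0) {k₀ : Fin g} (hk₀ : ∀ k, k₀ ≤ k) (hf0 : f k₀ 0 ≠ 0)
    (hlt : ∑ j : Fin (m k₀), qoExp m b c k₀ ⟨k₀, j⟩ < 1) :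
    Tendsto (fun t => ‖qoXi m b c f t‖) (𝓝[{t | ∀ p, t p ≠ 0}] 0) atTop := by
  have hu0 : qoUnit m b f k₀ 0 ≠ 0 := qoUnit_zero hm hbpos hbzero hk₀ ▸ hf0
  have he : ∃ p, b k₀ p ≠ 0 := ⟨⟨k₀, ⟨0, hm k₀⟩⟩, (hbpos k₀ _ le_rfl).ne'⟩
  have hsum : ∑ p, ((b k₀ p : ℝ) / c p) < 1 := by
    rw [sum_div_eq_sum_qoExp c hbzero hk₀]
    exact_mod_cast hlt
  have h := tendsto_norm_fderiv_prod_pow_mul_div (analyticAt_qoUnit hf k₀) hu0 hc he hsum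
  unfold qoXi
  rw [qoPhi_eq_qoMonom_mul_qoUnit fun k p => hbmono k₀ k p (hk₀ k)]
  exact h

end QuasiOrdinary

theorem qo_limits_eta_zero_of_sum_lt_one
    {g : ℕ} (hg : 0 < g) (m : Fin g → ℕ) (hm : ∀ k, 0 < m k)
    (b : Fin g → ((k : Fin g) × Fin (m k)) → ℕ)
    (c : ((k : Fin g) × Fin (m k)) → ℕ) (hc : ∀ p, 0 < c p)
    (hbpos : ∀ (k : Fin g) (p : (k : Fin g) × Fin (m k)), p.1 ≤ k → 0 < b k p)
    (hbzero : ∀ (k : Fin g) (p : (k : Fin g) × Fin (m k)), k < p.1 → b k p = 0)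
    (hbmono : ∀ (k k' : Fin g) (p : (k : Fin g) × Fin (m k)), k ≤ k' → b k p ≤ b k' p)
    (f : Fin g → (((k : Fin g) × Fin (m k)) → ℂ) → ℂ)
    (hf : ∀ k, AnalyticAt ℂ (f k) 0) (hf0 : ∀ k, f k 0 ≠ 0)
    (hlt : ∑ j : Fin (m ⟨0, hg⟩), qoExp m b c ⟨0, hg⟩ ⟨⟨0, hg⟩, j⟩ < 1) :
    ∀ ℓ ∈ qoLambda m b c f, ℓ.rep.2 = 0 := by
  rintro ℓ ⟨t, ht, ht0, hG⟩
  have hblowup := tendsto_norm_qoXi hm hc hbpos hbzero hbmono hf (fun k => Nat.zero_le k)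
    (hf0 _) hlt
  exact Projectivization.rep_snd_eq_zero_of_tendsto_mk
    (hblowup.comp (tendsto_nhdsWithin_iff.mpr ⟨ht0, .of_forall (ht ·)⟩)) (by norm_num) hG
end
end

section
/- In the quasi-ordinary setup below, let I ⊆ {1, …, m_1} satisfy ∑_{j ∈ I} a_{11j} = 1 and assume ∑_{j=1}^{m_1} a_{11j} > 1. Then Λ ⊆ {∏_{j ∈ I} ξ_{1j} = 0}: every point ℓ ∈ Λ has homogeneous coordinate ξ_{1j} equal to 0 for at least one j ∈ I. -/
/-
Near the origin `t_p ∂φ/∂t_p = ∑_k M_k (b_{kp} f_k + t_p ∂f_k/∂t_p)`, and `|M_k| ≤ |M_1|` on the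
unit polydisc because `M_1 ∣ M_k`; hence `|ξ_p| |t_p|^{c_p} ≤ C |M_1(t)|`. Raising these bounds
for `p = (1, j)`, `j ∈ I`, to the powers `a_{11j}`, which sum to `1`, and multiplying gives
`∏_{j ∈ I} |ξ_{1j}|^{a_{11j}} ≤ C |M_1(t)| / ∏_{j ∈ I} |t_{1j}|^{b_{11j}}`. Since
`∑_j a_{11j} > 1`, this quotient is a monomial still divisible by some `t_{1j}` with `j ∉ I`,
so it tends to `0` with `t`. Along `G(t)` the scale-invariant function
`∏_{j ∈ I} |ξ_{1j}| / ‖(ξ, η)‖` on projective space is at most that weighted product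
(`η = -1` and every `a_{11j} ≤ 1`), so by continuity it vanishes at every limit of tangents.
-/

open Filter Topology

noncomputable section

open scoped LinearAlgebra.Projectivization

namespace Projectivization

variable {K V Y : Type*} [DivisionRing K] [AddCommGroup V] [Module K V] [TopologicalSpace V]
  [TopologicalSpace Y]

theorem tendsto_apply_rep_of_tendsto_mk {α : Type*} {l : Filter α} {h : V → Y}
    (hcont : ContinuousOn h {v | v ≠ 0})
    (hsmul : ∀ a : K, a ≠ 0 → ∀ v : V, h (a • v) = h v)
    {v : α → V} (hv : ∀ n, v n ≠ 0) {ℓ : ℙ K V}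
    (hlim : Tendsto (fun n => mk K (v n) (hv n)) l (𝓝 ℓ)) :
    Tendsto (fun n => h (v n)) l (𝓝 (h ℓ.rep)) := by
  let H : ℙ K V → Y := Projectivization.lift (fun w => h w) fun w _ a hw => by
    have ha : a ≠ 0 := by rintro rfl; exact w.2 (by simp [hw])
    rw [hw, hsmul a ha]
  have hH : Continuous H :=
    (continuousOn_iff_continuous_domRestrict.mp hcont).quotient_lift _
  have hHℓ : H ℓ = h ℓ.rep := by
    conv_lhs => rw [← mk_rep ℓ]
    rfl
  exact hHℓ ▸ (hH.tendsto ℓ).comp hlim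

end Projectivization

section CoordinateRatio

variable {𝕜 σ : Type*} [NormedField 𝕜] [Fintype σ]

theorem continuousOn_prod_norm_fst_apply_div_norm (s : Finset σ) :
    ContinuousOn (fun v : (σ → 𝕜) × 𝕜 => ∏ p ∈ s, ‖v.1 p‖ / ‖v‖) {v | v ≠ 0} :=
  continuousOn_finsetProd s fun p _ =>
    (by fun_prop : Continuous fun v : (σ → 𝕜) × 𝕜 => ‖v.1 p‖).continuousOn.div
      continuous_norm.continuousOn fun _ hv => norm_ne_zero_iff.mpr hv

theorem prod_norm_fst_apply_div_norm_smul (s : Finset σ) {a : 𝕜} (ha : a ≠ 0)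
    (v : (σ → 𝕜) × 𝕜) :
    ∏ p ∈ s, ‖(a • v).1 p‖ / ‖a • v‖ = ∏ p ∈ s, ‖v.1 p‖ / ‖v‖ := by
  simp only [Prod.smul_fst, Pi.smul_apply, norm_smul]
  exact Finset.prod_congr rfl fun p _ => mul_div_mul_left _ _ (norm_ne_zero_iff.mpr ha)

end CoordinateRatio

theorem fderiv_prod_pow_apply_single_mul {𝕜 ι : Type*} [NontriviallyNormedField 𝕜] [Fintype ι]
    [DecidableEq ι] (e : ι → ℕ) (t : ι → 𝕜) (p : ι) :
    fderiv 𝕜 (fun t : ι → 𝕜 => ∏ q, t q ^ e q) t (Pi.single p 1) * t p =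
      e p * ∏ q, t q ^ e q := by
  have hpow := fun q (_ : q ∈ Finset.univ) => (hasFDerivAt_apply (𝕜 := 𝕜) q t).pow (e q)
  rw [(HasFDerivAt.finsetProd hpow).fderiv, sum_apply,
    Finset.sum_eq_single p (fun q _ hqp => by simp [Pi.single_eq_of_ne hqp]) (by simp),
    ← Finset.mul_prod_erase _ _ (Finset.mem_univ p)]
  simp only [smul_apply, ContinuousLinearMap.proj_apply, Pi.single_eq_same, smul_eq_mul, mul_one]
  rcases Nat.eq_zero_or_pos (e p) with he | he
  · simp [he]
  · calc _ = e p * (t p ^ (e p - 1) * t p) * ∏ q ∈ Finset.univ.erase p, t q ^ e q := by ring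
      _ = _ := by rw [← pow_succ, Nat.sub_add_cancel he]; ring

section WeightedProduct

variable {ι : Type*}

theorem prod_div_le_prod_rpow {s : Finset ι} {x a : ι → ℝ} {N : ℝ} (hN : 1 ≤ N)
    (hx0 : ∀ j ∈ s, 0 ≤ x j) (hxN : ∀ j ∈ s, x j ≤ N) (ha0 : ∀ j ∈ s, 0 ≤ a j)
    (ha1 : ∀ j ∈ s, a j ≤ 1) :
    ∏ j ∈ s, x j / N ≤ ∏ j ∈ s, x j ^ a j := by
  have hN0 : 0 < N := by linarith
  refine Finset.prod_le_prod (fun j hj => div_nonneg (hx0 j hj) hN0.le) fun j hj => ?_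
  calc x j / N = (x j / N) ^ (1 : ℝ) := (Real.rpow_one _).symm
    _ ≤ (x j / N) ^ a j := Real.rpow_le_rpow_of_exponent_ge' (div_nonneg (hx0 j hj) hN0.le)
        ((div_le_one hN0).mpr (hxN j hj)) (ha0 j hj) (ha1 j hj)
    _ ≤ x j ^ a j := Real.rpow_le_rpow (div_nonneg (hx0 j hj) hN0.le)
        (div_le_self (hx0 j hj) hN) (ha0 j hj)

theorem prod_rpow_mul_prod_pow_le {s : Finset ι} {x u : ι → ℝ} {b c : ι → ℕ} {K : ℝ}
    (hx : ∀ j ∈ s, 0 ≤ x j) (hu : ∀ j ∈ s, 0 ≤ u j) (hc : ∀ j ∈ s, c j ≠ 0)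
    (hsum : ∑ j ∈ s, (b j / c j : ℝ) = 1) (hK : ∀ j ∈ s, x j * u j ^ c j ≤ K) :
    (∏ j ∈ s, x j ^ (b j / c j : ℝ)) * ∏ j ∈ s, u j ^ b j ≤ K := by
  obtain ⟨j₀, hj₀⟩ : s.Nonempty :=
    Finset.nonempty_of_sum_ne_zero (by rw [hsum]; exact one_ne_zero)
  have hK0 : 0 ≤ K := (mul_nonneg (hx j₀ hj₀) (pow_nonneg (hu j₀ hj₀) _)).trans (hK j₀ hj₀)
  calc (∏ j ∈ s, x j ^ (b j / c j : ℝ)) * ∏ j ∈ s, u j ^ b j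
      = ∏ j ∈ s, (x j * u j ^ c j) ^ (b j / c j : ℝ) := by
        rw [← Finset.prod_mul_distrib]
        refine Finset.prod_congr rfl fun j hj => ?_
        rw [Real.mul_rpow (hx j hj) (pow_nonneg (hu j hj) _), ← Real.rpow_natCast (u j) (c j),
          ← Real.rpow_mul (hu j hj), mul_div_cancel₀ _ (Nat.cast_ne_zero.mpr (hc j hj)),
          Real.rpow_natCast]
    _ ≤ ∏ j ∈ s, K ^ (b j / c j : ℝ) :=
        Finset.prod_le_prod (fun j hj => by have := hx j hj; have := hu j hj; positivity)
          fun j hj => Real.rpow_le_rpow (by have := hx j hj; have := hu j hj; positivity)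
            (hK j hj) (by positivity)
    _ = K := by
        rw [← Real.rpow_sum_of_nonneg hK0 fun j _ => by positivity, hsum, Real.rpow_one]

theorem prod_pow_le_prod_pow_mul_pow [Fintype ι] [DecidableEq ι] {u : ι → ℝ}
    (hu0 : ∀ q, 0 ≤ u q) (hu1 : ∀ q, u q ≤ 1) (e : ι → ℕ) {s : Finset ι} {i : ι}
    (hi : i ∉ s) :
    ∏ q, u q ^ e q ≤ (∏ q ∈ s, u q ^ e q) * u i ^ e i := by
  rw [← Finset.prod_mul_prod_compl s, ← Finset.mul_prod_erase sᶜ _ (Finset.mem_compl.mpr hi)]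
  gcongr
  · exact Finset.prod_nonneg fun q _ => pow_nonneg (hu0 q) _
  · exact mul_le_of_le_one_right (pow_nonneg (hu0 i) _) (Finset.prod_le_one
      (fun q _ => pow_nonneg (hu0 q) _) fun q _ => pow_le_one₀ (hu0 q) (hu1 q))

theorem prod_rpow_le_mul_pow_of_mul_pow_le [Fintype ι] [DecidableEq ι] {s : Finset ι}
    {x u : ι → ℝ} {b c : ι → ℕ} {C : ℝ} {i : ι} (hi : i ∉ s) (hC : 0 ≤ C)
    (hx : ∀ j ∈ s, 0 ≤ x j) (hu0 : ∀ q, 0 < u q) (hu1 : ∀ q, u q ≤ 1)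
    (hc : ∀ j ∈ s, c j ≠ 0) (hsum : ∑ j ∈ s, (b j / c j : ℝ) = 1)
    (hK : ∀ j ∈ s, x j * u j ^ c j ≤ C * ∏ q, u q ^ b q) :
    ∏ j ∈ s, x j ^ (b j / c j : ℝ) ≤ C * u i ^ b i := by
  have hpos : 0 < ∏ q ∈ s, u q ^ b q := Finset.prod_pos fun q _ => pow_pos (hu0 q) _
  refine le_of_mul_le_mul_right ?_ hpos
  calc (∏ j ∈ s, x j ^ (b j / c j : ℝ)) * ∏ q ∈ s, u q ^ b q ≤ C * ∏ q, u q ^ b q :=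
        prod_rpow_mul_prod_pow_le hx (fun j _ => (hu0 j).le) hc hsum hK
    _ ≤ C * ((∏ q ∈ s, u q ^ b q) * u i ^ b i) :=
        mul_le_mul_of_nonneg_left
          (prod_pow_le_prod_pow_mul_pow (fun q => (hu0 q).le) hu1 b hi) hC
    _ = C * u i ^ b i * ∏ q ∈ s, u q ^ b q := by ring

end WeightedProduct

theorem exists_notMem_pos_of_sum_lt_sum {ι M : Type*} [Fintype ι] [DecidableEq ι]
    [AddCommGroup M] [LinearOrder M] [IsOrderedAddMonoid M] {s : Finset ι} {a : ι → M}
    (h : ∑ j ∈ s, a j < ∑ j, a j) : ∃ j ∉ s, 0 < a j := by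
  rw [← Finset.sum_add_sum_compl s] at h
  obtain ⟨j, hj, hpos⟩ := Finset.exists_lt_of_sum_lt (s := sᶜ) (f := 0) (g := a)
    (by simpa using h)
  exact ⟨j, Finset.mem_compl.mp hj, hpos⟩

theorem eventually_forall_norm_apply_le_one {ι E α : Type*} [Fintype ι]
    [SeminormedAddCommGroup E] {l : Filter α} {t : α → ι → E} (ht0 : Tendsto t l (𝓝 0)) :
    ∀ᶠ n in l, ∀ p, ‖t n p‖ ≤ 1 :=
  (ht0.norm.eventually (eventually_le_nhds (by simp))).mono
    fun n hn p => (norm_le_pi_norm (t n) p).trans hn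

section QuasiOrdinary

variable {g : ℕ} {m : Fin g → ℕ} {b : Fin g → ((k : Fin g) × Fin (m k)) → ℕ}
  {c : ((k : Fin g) × Fin (m k)) → ℕ} {f : Fin g → (((k : Fin g) × Fin (m k)) → ℂ) → ℂ}
  {k₀ : Fin g}

theorem qoPhi_fderiv_apply_single_mul {t : ((k : Fin g) × Fin (m k)) → ℂ}
    (hf : ∀ k, DifferentiableAt ℂ (f k) t) (p : (k : Fin g) × Fin (m k)) :
    fderiv ℂ (qoPhi m b f) t (Pi.single p 1) * t p =
      ∑ k, qoMonom m b k t * (b k p * f k t + fderiv ℂ (f k) t (Pi.single p 1) * t p) := by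
  have hM : ∀ k, DifferentiableAt ℂ (qoMonom m b k) t := fun k => by
    unfold qoMonom; fun_prop
  rw [show qoPhi m b f = fun t => ∑ k, qoMonom m b k t * f k t from rfl,
    fderiv_fun_sum fun k _ => (hM k).fun_mul (hf k), sum_apply, Finset.sum_mul]
  refine Finset.sum_congr rfl fun k _ => ?_
  have heuler := fderiv_prod_pow_apply_single_mul (b k) t p
  rw [fderiv_fun_mul (hM k) (hf k)]
  simp only [add_apply, smul_apply, smul_eq_mul]
  rw [show qoMonom m b k = fun t => ∏ q, t q ^ b k q from rfl] at *
  linear_combination f k t * heuler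

theorem norm_qoMonom (k : Fin g) (t : ((k : Fin g) × Fin (m k)) → ℂ) :
    ‖qoMonom m b k t‖ = ∏ p, ‖t p‖ ^ b k p := by
  simp only [qoMonom, norm_prod, norm_pow]

theorem norm_qoMonom_le_of_le {k k' : Fin g} (hb : ∀ p, b k p ≤ b k' p)
    {t : ((k : Fin g) × Fin (m k)) → ℂ} (ht : ∀ p, ‖t p‖ ≤ 1) :
    ‖qoMonom m b k' t‖ ≤ ‖qoMonom m b k t‖ := by
  rw [norm_qoMonom, norm_qoMonom]
  exact Finset.prod_le_prod (fun p _ => by positivity)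
    fun p _ => pow_le_pow_of_le_one (norm_nonneg _) (ht p) (hb p)

theorem norm_qoXi_mul_pow_le (hb : ∀ k p, b k₀ p ≤ b k p) {t : ((k : Fin g) × Fin (m k)) → ℂ}
    (ht : ∀ p, ‖t p‖ ≤ 1) (hf : ∀ k, DifferentiableAt ℂ (f k) t)
    {p : (k : Fin g) × Fin (m k)} (hc : 0 < c p) (htp : t p ≠ 0) :
    ‖qoXi m b c f t p‖ * ‖t p‖ ^ c p ≤
      (∑ k, (b k p * ‖f k t‖ + ‖fderiv ℂ (f k) t‖)) * ‖qoMonom m b k₀ t‖ := by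
  have hscale : ‖qoXi m b c f t p‖ * ‖t p‖ ^ c p =
      ‖fderiv ℂ (qoPhi m b f) t (Pi.single p 1) * t p‖ / c p := by
    have hpow : ‖t p‖ ^ c p = ‖t p‖ ^ (c p - 1) * ‖t p‖ := by
      rw [← pow_succ, Nat.sub_add_cancel hc]
    have : ‖t p‖ ^ (c p - 1) ≠ 0 := pow_ne_zero _ (norm_ne_zero_iff.mpr htp)
    rw [qoXi, norm_div, norm_mul, norm_mul, norm_pow, Complex.norm_natCast, hpow]
    field_simp
  have hterm : ∀ k, ‖(b k p : ℂ) * f k t + fderiv ℂ (f k) t (Pi.single p 1) * t p‖ ≤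
      b k p * ‖f k t‖ + ‖fderiv ℂ (f k) t‖ := fun k => by
    have hdir : ‖fderiv ℂ (f k) t (Pi.single p 1)‖ ≤ ‖fderiv ℂ (f k) t‖ := by
      simpa [Pi.norm_single] using (fderiv ℂ (f k) t).le_opNorm (Pi.single p 1)
    refine (norm_add_le _ _).trans ?_
    rw [norm_mul, norm_mul, Complex.norm_natCast]
    gcongr
    exact (mul_le_of_le_one_right (norm_nonneg _) (ht p)).trans hdir
  calc ‖qoXi m b c f t p‖ * ‖t p‖ ^ c p
      ≤ ‖fderiv ℂ (qoPhi m b f) t (Pi.single p 1) * t p‖ := by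
        rw [hscale]; exact div_le_self (norm_nonneg _) (by exact_mod_cast hc)
    _ ≤ ∑ k, ‖qoMonom m b k₀ t‖ * (b k p * ‖f k t‖ + ‖fderiv ℂ (f k) t‖) := by
        rw [qoPhi_fderiv_apply_single_mul hf]
        refine (norm_sum_le _ _).trans (Finset.sum_le_sum fun k _ => ?_)
        rw [norm_mul]
        exact mul_le_mul (norm_qoMonom_le_of_le (hb k) ht) (hterm k) (norm_nonneg _)
          (norm_nonneg _)
    _ = _ := by rw [Finset.sum_mul]; exact Finset.sum_congr rfl fun k _ => mul_comm _ _

theorem exists_eventually_norm_qoXi_mul_pow_le (hb : ∀ k p, b k₀ p ≤ b k p)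
    (hc : ∀ p, 0 < c p) (hf : ∀ k, AnalyticAt ℂ (f k) 0) {α : Type*} {l : Filter α}
    {t : α → ((k : Fin g) × Fin (m k)) → ℂ} (ht : ∀ n p, t n p ≠ 0)
    (ht0 : Tendsto t l (𝓝 0)) :
    ∃ C, 0 ≤ C ∧ ∀ᶠ n in l, ∀ p,
      ‖qoXi m b c f (t n) p‖ * ‖t n p‖ ^ c p ≤ C * ‖qoMonom m b k₀ (t n)‖ := by
  let S : (((k : Fin g) × Fin (m k)) → ℂ) → (k : Fin g) × Fin (m k) → ℝ :=
    fun x p => ∑ k, (b k p * ‖f k x‖ + ‖fderiv ℂ (f k) x‖)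
  have hS0 : ∀ x p, 0 ≤ S x p := fun x p => by positivity
  have hScont : ContinuousAt (fun x => ∑ p, S x p) 0 := by
    have := fun k => (hf k).continuousAt
    have := fun k => (hf k).fderiv.continuousAt
    fun_prop
  refine ⟨∑ p, S 0 p + 1, by positivity, ?_⟩
  have hdiff : ∀ᶠ n in l, ∀ k, DifferentiableAt ℂ (f k) (t n) :=
    eventually_all.mpr fun k => ht0.eventually
      ((hf k).eventually_analyticAt.mono fun x hx => hx.differentiableAt)
  have hbound : ∀ᶠ n in l, ∑ p, S (t n) p ≤ ∑ p, S 0 p + 1 :=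
    (hScont.tendsto.comp ht0).eventually (eventually_le_nhds (lt_add_one _))
  filter_upwards [eventually_forall_norm_apply_le_one ht0, hdiff, hbound]
    with n hsmall hdiff hbound p
  calc _ ≤ S (t n) p * ‖qoMonom m b k₀ (t n)‖ :=
        norm_qoXi_mul_pow_le hb hsmall hdiff (hc p) (ht n p)
    _ ≤ _ := by
        gcongr
        exact (Finset.single_le_sum (fun q _ => hS0 _ q) (Finset.mem_univ p)).trans hbound

theorem exists_eventually_prod_norm_qoXi_div_le (hb : ∀ k p, b k₀ p ≤ b k p)
    (hc : ∀ p, 0 < c p) (hf : ∀ k, AnalyticAt ℂ (f k) 0) {α : Type*} {l : Filter α}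
    {t : α → ((k : Fin g) × Fin (m k)) → ℂ} (ht : ∀ n p, t n p ≠ 0)
    (ht0 : Tendsto t l (𝓝 0)) {s : Finset ((k : Fin g) × Fin (m k))}
    (hsum : ∑ p ∈ s, (b k₀ p / c p : ℝ) = 1) {i : (k : Fin g) × Fin (m k)} (hi : i ∉ s) :
    ∃ C, ∀ᶠ n in l,
      ∏ p ∈ s, ‖qoXi m b c f (t n) p‖ / ‖(qoXi m b c f (t n), (-1 : ℂ))‖ ≤
        C * ‖t n i‖ ^ b k₀ i := by
  obtain ⟨C, hC, hbound⟩ := exists_eventually_norm_qoXi_mul_pow_le hb hc hf ht ht0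
  refine ⟨C, ?_⟩
  filter_upwards [hbound, eventually_forall_norm_apply_le_one ht0] with n hbound hsmall
  set ξ := qoXi m b c f (t n)
  have hN : 1 ≤ ‖(ξ, (-1 : ℂ))‖ := by simp
  have hξN : ∀ p ∈ s, ‖ξ p‖ ≤ ‖(ξ, (-1 : ℂ))‖ := fun p _ =>
    (norm_le_pi_norm ξ p).trans (norm_fst_le (ξ, (-1 : ℂ)))
  have hweight : ∀ p ∈ s, (b k₀ p / c p : ℝ) ≤ 1 := fun p hp =>
    hsum ▸ Finset.single_le_sum (f := fun p => (b k₀ p / c p : ℝ)) (fun _ _ => by positivity) hp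
  calc _ ≤ ∏ p ∈ s, ‖ξ p‖ ^ (b k₀ p / c p : ℝ) :=
        prod_div_le_prod_rpow hN (fun _ _ => norm_nonneg _) hξN (fun _ _ => by positivity)
          hweight
    _ ≤ C * ‖t n i‖ ^ b k₀ i :=
        prod_rpow_le_mul_pow_of_mul_pow_le (u := fun p => ‖t n p‖) hi hC
          (fun _ _ => norm_nonneg _) (fun p => norm_pos_iff.mpr (ht n p)) hsmall
          (fun p _ => (hc p).ne') hsum fun p _ => norm_qoMonom k₀ (t n) ▸ hbound p

end QuasiOrdinary

theorem qo_limits_prod_xi_zero_of_sum_eq_one_first_general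
    {g : ℕ} (hg : 0 < g) (m : Fin g → ℕ)
    (b : Fin g → ((k : Fin g) × Fin (m k)) → ℕ)
    (c : ((k : Fin g) × Fin (m k)) → ℕ) (hc : ∀ p, 0 < c p)
    (hbmono : ∀ (k k' : Fin g) (p : (k : Fin g) × Fin (m k)), k ≤ k' → b k p ≤ b k' p)
    (f : Fin g → (((k : Fin g) × Fin (m k)) → ℂ) → ℂ)
    (hf : ∀ k, AnalyticAt ℂ (f k) 0)
    (I : Finset (Fin (m ⟨0, hg⟩)))
    (hI : ∑ j ∈ I, qoExp m b c ⟨0, hg⟩ ⟨⟨0, hg⟩, j⟩ = 1)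
    (hgt : 1 < ∑ j : Fin (m ⟨0, hg⟩), qoExp m b c ⟨0, hg⟩ ⟨⟨0, hg⟩, j⟩) :
    ∀ ℓ ∈ qoLambda m b c f, ∃ j ∈ I, ℓ.rep.1 ⟨⟨0, hg⟩, j⟩ = 0 := by
  rintro ℓ ⟨t, ht, ht0, hG⟩
  let s := I.map (Function.Embedding.sigmaMk (β := fun k => Fin (m k)) ⟨0, hg⟩)
  have hsum : ∑ p ∈ s, (b ⟨0, hg⟩ p / c p : ℝ) = 1 := by
    simpa [s, qoExp] using congrArg (Rat.cast : ℚ → ℝ) hI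
  obtain ⟨j₁, hj₁, hexp⟩ := exists_notMem_pos_of_sum_lt_sum (hI ▸ hgt)
  have hb₁ : b ⟨0, hg⟩ ⟨⟨0, hg⟩, j₁⟩ ≠ 0 := fun h => by simp [qoExp, h] at hexp
  obtain ⟨C, hC⟩ := exists_eventually_prod_norm_qoXi_div_le (i := ⟨⟨0, hg⟩, j₁⟩)
    (fun k p => hbmono _ k p (Nat.zero_le k)) hc hf ht ht0 hsum (by simpa [s] using hj₁)
  have hbound_lim : Tendsto (fun n => C * ‖t n ⟨⟨0, hg⟩, j₁⟩‖ ^ b ⟨0, hg⟩ ⟨⟨0, hg⟩, j₁⟩)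
      atTop (𝓝 0) := by
    simpa [hb₁] using
      ((((continuous_apply _).tendsto 0).comp ht0).norm.pow (b ⟨0, hg⟩ ⟨⟨0, hg⟩, j₁⟩)).const_mul C
  have hlim := Projectivization.tendsto_apply_rep_of_tendsto_mk
    (continuousOn_prod_norm_fst_apply_div_norm s)
    (fun _ => prod_norm_fst_apply_div_norm_smul s) (fun n => qoVec_ne _) hG
  have hzero := tendsto_nhds_unique hlim
    (squeeze_zero' (.of_forall fun n => by positivity) hC hbound_lim)
  obtain ⟨p, hp, hp0⟩ := Finset.prod_eq_zero_iff.mp hzero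
  obtain ⟨j, hj, rfl⟩ := Finset.mem_map.mp hp
  exact ⟨j, hj, by simpa [ℓ.rep_nonzero] using hp0⟩

theorem qo_limits_prod_xi_zero_of_sum_eq_one_first
    {g : ℕ} (hg : 0 < g) (m : Fin g → ℕ) (hm : ∀ k, 0 < m k)
    (b : Fin g → ((k : Fin g) × Fin (m k)) → ℕ)
    (c : ((k : Fin g) × Fin (m k)) → ℕ) (hc : ∀ p, 0 < c p)
    (hbpos : ∀ (k : Fin g) (p : (k : Fin g) × Fin (m k)), p.1 ≤ k → 0 < b k p)
    (hbzero : ∀ (k : Fin g) (p : (k : Fin g) × Fin (m k)), k < p.1 → b k p = 0)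
    (hbmono : ∀ (k k' : Fin g) (p : (k : Fin g) × Fin (m k)), k ≤ k' → b k p ≤ b k' p)
    (f : Fin g → (((k : Fin g) × Fin (m k)) → ℂ) → ℂ)
    (hf : ∀ k, AnalyticAt ℂ (f k) 0) (hf0 : ∀ k, f k 0 ≠ 0)
    (I : Finset (Fin (m ⟨0, hg⟩)))
    (hI : ∑ j ∈ I, qoExp m b c ⟨0, hg⟩ ⟨⟨0, hg⟩, j⟩ = 1)
    (hgt : 1 < ∑ j : Fin (m ⟨0, hg⟩), qoExp m b c ⟨0, hg⟩ ⟨⟨0, hg⟩, j⟩) :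
    ∀ ℓ ∈ qoLambda m b c f, ∃ j ∈ I, ℓ.rep.1 ⟨⟨0, hg⟩, j⟩ = 0 :=
  qo_limits_prod_xi_zero_of_sum_eq_one_first_general hg m b c hc hbmono f hf I hI hgt
end
end

section
/- In the quasi-ordinary setup below, assume ∑_{i=1}^{m_1} a_{11i} = 1, and let (e_1, …, e_{m_1}) be the unique tuple of positive integers with gcd(e_1, …, e_{m_1}) = 1 and a_{11i} · ∑_{j=1}^{m_1} e_j = e_i for all i. Then Λ is contained in the cone defined by the homogeneous equation ∏_{i=1}^{m_1} ξ_{1i}^{e_i} − (−1)^{∑_j e_j} · f_1(0)^{∑_j e_j} · (∏_{j=1}^{m_1} a_{11j}^{e_j}) · η^{∑_j e_j} = 0; that is, every point of Λ satisfies this equation in its homogeneous coordinates. -/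
/-!
Near the origin the leading monomial `M₁` divides every `M_k`, and Euler's identity for
monomials gives
`c_{1i} ξ_{1i} t_{1i} ^ c_{1i} = t_{1i} ∂φ/∂t_{1i} = ∑_k M_k (b_{k,1i} f_k + t_{1i} ∂f_k/∂t_{1i})`.
As `M_k / M₁` vanishes at `0` for `k > 1`, this yields
`ξ_{1i} t_{1i} ^ c_{1i} / M₁ → a_{11i} f₁(0)`. The relation `a_{11i} ∑ e_j = e_i` says
`M₁ ^ (∑ e_j) = ∏ t_{1i} ^ (c_{1i} e_i)`, so `∏ ξ_{1i} ^ e_i` is the product of these quotients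
raised to `e_i` and tends to `f₁(0) ^ (∑ e_j) ∏ a_{11i} ^ e_i`. Thus the form of the cone tends
to `0` on the vectors `(ξ, -1)` representing `G(t)`. Being homogeneous, the form divided by
`‖v‖ ^ (∑ e_j)` is a continuous function on projective space, so it vanishes at every limit point.
-/

open Filter Topology

noncomputable section

section Monomial

variable {𝕜 ι : Type*} [NontriviallyNormedField 𝕜] [Fintype ι]

theorem mul_fderiv_prod_pow_single [DecidableEq ι] (N : ι → ℕ) (t : ι → 𝕜) (p : ι) :
    t p * fderiv 𝕜 (fun s : ι → 𝕜 => ∏ q, s q ^ N q) t (Pi.single p 1) =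
      N p * ∏ q, t q ^ N q := by
  have hD : HasFDerivAt (fun s : ι → 𝕜 => ∏ q, s q ^ N q) _ t :=
    HasFDerivAt.finsetProd (u := Finset.univ) fun q _ =>
      (hasDerivAt_pow (N q) (t q)).comp_hasFDerivAt t (hasFDerivAt_apply (𝕜 := 𝕜) q t)
  rw [hD.fderiv, sum_apply, Finset.sum_eq_single p (fun q _ hq => by simp [hq]) (by simp),
    ← Finset.mul_prod_erase _ _ (Finset.mem_univ p)]
  rcases Nat.eq_zero_or_pos (N p) with hN | hN
  · simp [hN]
  · simp only [smul_apply, ContinuousLinearMap.proj_apply, Pi.single_eq_same,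
      smul_eq_mul, mul_one]
    rw [← Nat.sub_add_cancel hN, pow_succ]
    push_cast
    ring

theorem prod_pow_eq_mul_prod_pow_sub {M : Type*} [CommMonoid M] {N N' : ι → ℕ} (h : N ≤ N')
    (t : ι → M) : ∏ q, t q ^ N' q = (∏ q, t q ^ N q) * ∏ q, t q ^ (N' q - N q) := by
  rw [← Finset.prod_mul_distrib]
  exact Finset.prod_congr rfl fun q _ => by rw [← pow_add, Nat.add_sub_cancel' (h q)]

end Monomial

open scoped LinearAlgebra.Projectivization

namespace Projectivization

variable {𝕜 V : Type*} [NormedField 𝕜] [NormedAddCommGroup V] [NormedSpace 𝕜 V]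

def normRatio (Q : V → 𝕜) (d : ℕ) (hQ : ∀ (s : 𝕜) v, Q (s • v) = s ^ d * Q v) : ℙ 𝕜 V → ℝ :=
  Projectivization.lift (fun v => ‖Q v‖ / ‖(v : V)‖ ^ d) <| by
    rintro ⟨-, hv⟩ ⟨w, hw⟩ s rfl
    have hs : s ≠ 0 := by rintro rfl; simp at hv
    simp only [hQ, norm_mul, norm_pow, norm_smul, mul_pow]
    exact mul_div_mul_left _ _ (pow_ne_zero _ (norm_ne_zero_iff.mpr hs))

variable {Q : V → 𝕜} {d : ℕ}

theorem continuous_normRatio (hQc : Continuous Q) (hQ : ∀ (s : 𝕜) v, Q (s • v) = s ^ d * Q v) :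
    Continuous (normRatio Q d hQ) :=
  Continuous.quotient_lift (((hQc.comp continuous_subtype_val).norm).div
    (continuous_subtype_val.norm.pow d) fun v => pow_ne_zero _ (norm_ne_zero_iff.mpr v.2)) _

theorem normRatio_mk (hQ : ∀ (s : 𝕜) v, Q (s • v) = s ^ d * Q v) {v : V} (hv : v ≠ 0) :
    normRatio Q d hQ (mk 𝕜 v hv) = ‖Q v‖ / ‖v‖ ^ d :=
  rfl

theorem map_rep_eq_zero_of_tendsto (hQc : Continuous Q)
    (hQ : ∀ (s : 𝕜) v, Q (s • v) = s ^ d * Q v) {v : ℕ → V} (hv : ∀ n, v n ≠ 0) {r : ℝ}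
    (hr : 0 < r) (hvr : ∀ n, r ≤ ‖v n‖) (hQv : Tendsto (fun n => Q (v n)) atTop (𝓝 0))
    {ℓ : ℙ 𝕜 V} (hℓ : Tendsto (fun n => mk 𝕜 (v n) (hv n)) atTop (𝓝 ℓ)) : Q ℓ.rep = 0 := by
  have hlim : Tendsto (fun n => normRatio Q d hQ (mk 𝕜 (v n) (hv n))) atTop (𝓝 0) := by
    simp only [normRatio_mk]
    refine squeeze_zero (fun n => by positivity) (fun n => ?_)
      (by simpa using hQv.norm.div_const (r ^ d))
    gcongr
    exact hvr n
  have hℓ0 := tendsto_nhds_unique ((continuous_normRatio hQc hQ).tendsto ℓ |>.comp hℓ) hlim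
  rw [← mk_rep ℓ, normRatio_mk] at hℓ0
  simpa [ℓ.rep_nonzero] using hℓ0

end Projectivization

section ConeForm

variable {R ι κ : Type*} [CommRing R] [Fintype κ] (σ : κ → ι) (e : κ → ℕ) (K : R)

def coneForm (v : (ι → R) × R) : R :=
  ∏ i, v.1 (σ i) ^ e i - K * v.2 ^ ∑ j, e j

theorem coneForm_smul (s : R) (v : (ι → R) × R) :
    coneForm σ e K (s • v) = s ^ (∑ j, e j) * coneForm σ e K v := by
  simp only [coneForm, Prod.smul_fst, Prod.smul_snd, Pi.smul_apply, smul_eq_mul, mul_pow,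
    Finset.prod_mul_distrib, Finset.prod_pow_eq_pow_sum]
  ring

theorem continuous_coneForm [TopologicalSpace R] [IsTopologicalRing R] :
    Continuous (coneForm σ e K) := by
  unfold coneForm
  fun_prop

end ConeForm

section QuasiOrdinary

variable {g : ℕ} {m : Fin g → ℕ} {b : Fin g → ((k : Fin g) × Fin (m k)) → ℕ}
  {c : ((k : Fin g) × Fin (m k)) → ℕ} {f : Fin g → (((k : Fin g) × Fin (m k)) → ℂ) → ℂ}
  {t : ((k : Fin g) × Fin (m k)) → ℂ} {p : (k : Fin g) × Fin (m k)} {k₀ : Fin g}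

theorem mul_fderiv_qoPhi_single (hf : ∀ k, DifferentiableAt ℂ (f k) t) :
    t p * fderiv ℂ (qoPhi m b f) t (Pi.single p 1) =
      ∑ k, qoMonom m b k t * (b k p * f k t + t p * fderiv ℂ (f k) t (Pi.single p 1)) := by
  have hM : ∀ k, DifferentiableAt ℂ (qoMonom m b k) t := fun k => by
    unfold qoMonom
    fun_prop
  have hφ : HasFDerivAt (qoPhi m b f)
      (∑ k, (qoMonom m b k t • fderiv ℂ (f k) t + f k t • fderiv ℂ (qoMonom m b k) t)) t :=
    HasFDerivAt.fun_sum fun k _ => (hM k).hasFDerivAt.mul (hf k).hasFDerivAt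
  rw [hφ.fderiv, sum_apply, Finset.mul_sum]
  refine Finset.sum_congr rfl fun k _ => ?_
  have hEuler := mul_fderiv_prod_pow_single (b k) t p
  simp only [add_apply, smul_apply, smul_eq_mul]
  unfold qoMonom at hEuler ⊢
  linear_combination f k t * hEuler

theorem qoXi_mul_pow (hc : 0 < c p) (htp : t p ≠ 0) :
    qoXi m b c f t p * t p ^ c p = t p * fderiv ℂ (qoPhi m b f) t (Pi.single p 1) / c p := by
  have hc' : (c p : ℂ) ≠ 0 := by exact_mod_cast hc.ne'
  rw [qoXi, ← Nat.sub_add_cancel hc, pow_succ, Nat.add_sub_cancel]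
  field_simp

theorem qoMonom_ne_zero {k : Fin g} (ht : ∀ q, t q ≠ 0) : qoMonom m b k t ≠ 0 :=
  Finset.prod_ne_zero_iff.mpr fun q _ => pow_ne_zero _ (ht q)

/-- `M_k / M_{k₀}` when `M_{k₀}` divides `M_k`; the exponents are truncated differences. -/
def qoMonomQuot (b : Fin g → ((k : Fin g) × Fin (m k)) → ℕ) (k₀ k : Fin g)
    (t : ((k : Fin g) × Fin (m k)) → ℂ) : ℂ :=
  ∏ q, t q ^ (b k q - b k₀ q)

theorem qoMonom_eq_mul_qoMonomQuot {k : Fin g} (hb : b k₀ ≤ b k) :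
    qoMonom m b k t = qoMonom m b k₀ t * qoMonomQuot b k₀ k t :=
  prod_pow_eq_mul_prod_pow_sub hb t

theorem continuous_qoMonomQuot (k : Fin g) : Continuous (qoMonomQuot (m := m) b k₀ k) := by
  unfold qoMonomQuot
  fun_prop

@[simp]
theorem qoMonomQuot_self (k : Fin g) : qoMonomQuot b k k t = 1 := by
  simp [qoMonomQuot]

theorem qoMonomQuot_zero_of_lt {k : Fin g} {q : (k : Fin g) × Fin (m k)} (hq : b k₀ q < b k q) :
    qoMonomQuot b k₀ k 0 = 0 :=
  Finset.prod_eq_zero (Finset.mem_univ q) (zero_pow (Nat.sub_ne_zero_of_lt hq))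

theorem qoXi_mul_pow_div_qoMonom (hc : 0 < c p) (htp : t p ≠ 0) (hM : qoMonom m b k₀ t ≠ 0)
    (hb : ∀ k, b k₀ ≤ b k) (hf : ∀ k, DifferentiableAt ℂ (f k) t) :
    qoXi m b c f t p * t p ^ c p / qoMonom m b k₀ t =
      ∑ k, qoMonomQuot b k₀ k t *
        ((b k p * f k t + t p * fderiv ℂ (f k) t (Pi.single p 1)) / c p) := by
  rw [qoXi_mul_pow hc htp, mul_fderiv_qoPhi_single hf, Finset.sum_div, Finset.sum_div]
  refine Finset.sum_congr rfl fun k _ => ?_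
  rw [qoMonom_eq_mul_qoMonomQuot (hb k)]
  field_simp

theorem tendsto_qoXi_mul_pow_div_qoMonom (hc : 0 < c p) (hb : ∀ k, b k₀ ≤ b k)
    (hlt : ∀ k ≠ k₀, ∃ q, b k₀ q < b k q) (hf : ∀ k, AnalyticAt ℂ (f k) 0)
    {t : ℕ → ((k : Fin g) × Fin (m k)) → ℂ} (ht0 : ∀ n q, t n q ≠ 0)
    (ht : Tendsto t atTop (𝓝 0)) :
    Tendsto (fun n => qoXi m b c f (t n) p * t n p ^ c p / qoMonom m b k₀ (t n)) atTop
      (𝓝 (b k₀ p / c p * f k₀ 0)) := by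
  have hterm : ∀ k, ContinuousAt (fun s => qoMonomQuot b k₀ k s *
      ((b k p * f k s + s p * fderiv ℂ (f k) s (Pi.single p 1)) / c p)) 0 := fun k =>
    (continuous_qoMonomQuot k).continuousAt.mul
      (((continuousAt_const.mul (hf k).continuousAt).add ((continuous_apply p).continuousAt.mul
        ((hf k).fderiv.continuousAt.clm_apply continuousAt_const))).div_const _)
  have hS0 : ∑ k, qoMonomQuot b k₀ k 0 *
      ((b k p * f k 0 + (0 : ((k : Fin g) × Fin (m k)) → ℂ) p *
        fderiv ℂ (f k) 0 (Pi.single p 1)) / c p) = b k₀ p / c p * f k₀ 0 := by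
    rw [Finset.sum_eq_single k₀ (fun k _ hk => ?_) (by simp)]
    · simp only [qoMonomQuot_self, Pi.zero_apply]
      ring
    · obtain ⟨q, hq⟩ := hlt k hk
      rw [qoMonomQuot_zero_of_lt hq, zero_mul]
  have hdiff : ∀ᶠ n in atTop, ∀ k, DifferentiableAt ℂ (f k) (t n) :=
    ht.eventually (eventually_all.mpr fun k => (hf k).eventually_analyticAt.mono
      fun _ h => h.differentiableAt)
  rw [← hS0]
  refine (tendsto_finsetSum _ fun k _ => (hterm k).tendsto.comp ht).congr' ?_
  filter_upwards [hdiff] with n hn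
  exact (qoXi_mul_pow_div_qoMonom hc (ht0 n p) (qoMonom_ne_zero (ht0 n)) hb hn).symm

theorem qoMonom_eq_prod_fiber (hb : ∀ q : (k : Fin g) × Fin (m k), q.1 ≠ k₀ → b k₀ q = 0)
    (t : ((k : Fin g) × Fin (m k)) → ℂ) : qoMonom m b k₀ t = ∏ i, t ⟨k₀, i⟩ ^ b k₀ ⟨k₀, i⟩ := by
  rw [qoMonom, Fintype.prod_sigma, Finset.prod_eq_single k₀ (fun k _ hk => ?_) (by simp)]
  exact Finset.prod_eq_one fun j _ => by rw [hb ⟨k, j⟩ hk, pow_zero]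

theorem mul_eq_mul_of_qoExp_mul_eq {k : Fin g} (hc : 0 < c p) {E e : ℕ}
    (h : qoExp m b c k p * E = e) : b k p * E = c p * e := by
  rw [qoExp, div_mul_eq_mul_div, div_eq_iff (by positivity)] at h
  exact_mod_cast h.trans (mul_comm _ _)

theorem tendsto_prod_qoXi_pow {e : Fin (m k₀) → ℕ} (hc : ∀ p, 0 < c p) (hb : ∀ k, b k₀ ≤ b k)
    (hlt : ∀ k ≠ k₀, ∃ q, b k₀ q < b k q)
    (hfiber : ∀ q : (k : Fin g) × Fin (m k), q.1 ≠ k₀ → b k₀ q = 0)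
    (he : ∀ i, b k₀ ⟨k₀, i⟩ * ∑ j, e j = c ⟨k₀, i⟩ * e i) (hf : ∀ k, AnalyticAt ℂ (f k) 0)
    {t : ℕ → ((k : Fin g) × Fin (m k)) → ℂ} (ht0 : ∀ n q, t n q ≠ 0)
    (ht : Tendsto t atTop (𝓝 0)) :
    Tendsto (fun n => ∏ i, qoXi m b c f (t n) ⟨k₀, i⟩ ^ e i) atTop
      (𝓝 (∏ i, ((b k₀ ⟨k₀, i⟩ : ℂ) / c ⟨k₀, i⟩ * f k₀ 0) ^ e i)) := by
  have hMpow :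
      ∀ n, qoMonom m b k₀ (t n) ^ ∑ j, e j = ∏ i, t n ⟨k₀, i⟩ ^ (c ⟨k₀, i⟩ * e i) := by
    intro n
    simp_rw [qoMonom_eq_prod_fiber hfiber, ← Finset.prod_pow, ← pow_mul, he]
  have hquot : ∀ n, ∏ i, qoXi m b c f (t n) ⟨k₀, i⟩ ^ e i =
      ∏ i, (qoXi m b c f (t n) ⟨k₀, i⟩ * t n ⟨k₀, i⟩ ^ c ⟨k₀, i⟩ / qoMonom m b k₀ (t n)) ^ e i := by
    intro n
    simp_rw [div_pow, mul_pow, ← pow_mul]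
    rw [Finset.prod_div_distrib, Finset.prod_mul_distrib, Finset.prod_pow_eq_pow_sum, ← hMpow,
      mul_div_assoc, div_self (pow_ne_zero _ (qoMonom_ne_zero (ht0 n))), mul_one]
  simp_rw [hquot]
  exact tendsto_finsetProd _ fun i _ =>
    (tendsto_qoXi_mul_pow_div_qoMonom (hc _) hb hlt hf ht0 ht).pow (e i)

theorem coneForm_rep_eq_zero_of_mem_qoLambda {e : Fin (m k₀) → ℕ} (hc : ∀ p, 0 < c p)
    (hb : ∀ k, b k₀ ≤ b k) (hlt : ∀ k ≠ k₀, ∃ q, b k₀ q < b k q)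
    (hfiber : ∀ q : (k : Fin g) × Fin (m k), q.1 ≠ k₀ → b k₀ q = 0)
    (he : ∀ i, b k₀ ⟨k₀, i⟩ * ∑ j, e j = c ⟨k₀, i⟩ * e i) (hf : ∀ k, AnalyticAt ℂ (f k) 0)
    {ℓ : ℙ ℂ ((((k : Fin g) × Fin (m k)) → ℂ) × ℂ)} (hℓ : ℓ ∈ qoLambda m b c f) :
    coneForm (fun i => (⟨k₀, i⟩ : (k : Fin g) × Fin (m k))) e
      ((-1) ^ (∑ j, e j) * f k₀ 0 ^ (∑ j, e j) * ∏ i, ((b k₀ ⟨k₀, i⟩ : ℂ) / c ⟨k₀, i⟩) ^ e i)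
      ℓ.rep = 0 := by
  obtain ⟨t, ht0, ht, hG⟩ := hℓ
  refine Projectivization.map_rep_eq_zero_of_tendsto (continuous_coneForm _ _ _)
    (coneForm_smul _ _ _) _ one_pos (fun n => by simp) ?_ hG
  set K : ℂ :=
    (-1) ^ (∑ j, e j) * f k₀ 0 ^ (∑ j, e j) * ∏ i, ((b k₀ ⟨k₀, i⟩ : ℂ) / c ⟨k₀, i⟩) ^ e i
  have hsign : ((-1 : ℂ)) ^ (∑ j, e j) * (-1) ^ (∑ j, e j) = 1 := by
    rw [← mul_pow]
    norm_num
  have hvalue :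
      ∏ i, ((b k₀ ⟨k₀, i⟩ : ℂ) / c ⟨k₀, i⟩ * f k₀ 0) ^ e i - K * (-1) ^ (∑ j, e j) = 0 := by
    simp only [K, mul_pow, Finset.prod_mul_distrib, Finset.prod_pow_eq_pow_sum]
    linear_combination
      (-(f k₀ 0 ^ (∑ j, e j) * ∏ i, ((b k₀ ⟨k₀, i⟩ : ℂ) / c ⟨k₀, i⟩) ^ e i)) * hsign
  have hlim := (tendsto_prod_qoXi_pow hc hb hlt hfiber he hf ht0 ht).sub_const
    (K * (-1) ^ ∑ j, e j)
  rwa [hvalue] at hlim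

end QuasiOrdinary

theorem qo_limits_contained_in_cone_general
    {g : ℕ} (hg : 0 < g) (m : Fin g → ℕ) (hm : ∀ k, 0 < m k)
    (b : Fin g → ((k : Fin g) × Fin (m k)) → ℕ)
    (c : ((k : Fin g) × Fin (m k)) → ℕ) (hc : ∀ p, 0 < c p)
    (hbpos : ∀ (k : Fin g) (p : (k : Fin g) × Fin (m k)), p.1 ≤ k → 0 < b k p)
    (hbzero : ∀ (k : Fin g) (p : (k : Fin g) × Fin (m k)), k < p.1 → b k p = 0)
    (hbmono : ∀ (k k' : Fin g) (p : (k : Fin g) × Fin (m k)), k ≤ k' → b k p ≤ b k' p)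
    (f : Fin g → (((k : Fin g) × Fin (m k)) → ℂ) → ℂ)
    (hf : ∀ k, AnalyticAt ℂ (f k) 0)
    (e : Fin (m ⟨0, hg⟩) → ℕ)
    (he : ∀ i, qoExp m b c ⟨0, hg⟩ ⟨⟨0, hg⟩, i⟩ * (∑ j, (e j : ℚ)) = (e i : ℚ))
 :
    ∀ ℓ ∈ qoLambda m b c f,
      ∏ i : Fin (m ⟨0, hg⟩), ℓ.rep.1 ⟨⟨0, hg⟩, i⟩ ^ e i =
        (-1) ^ (∑ j, e j) * f ⟨0, hg⟩ 0 ^ (∑ j, e j) *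
          (∏ j : Fin (m ⟨0, hg⟩), ((qoExp m b c ⟨0, hg⟩ ⟨⟨0, hg⟩, j⟩ : ℚ) : ℂ) ^ e j) *
          ℓ.rep.2 ^ (∑ j, e j) := by
  intro ℓ hℓ
  have hfiber : ∀ q : (k : Fin g) × Fin (m k), q.1 ≠ ⟨0, hg⟩ → b ⟨0, hg⟩ q = 0 := fun q hq =>
    hbzero _ q (lt_of_le_of_ne (Nat.zero_le _) (Ne.symm hq))
  have hlt : ∀ k ≠ ⟨0, hg⟩, ∃ q, b ⟨0, hg⟩ q < b k q := fun k hk =>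
    ⟨⟨k, ⟨0, hm k⟩⟩, by rw [hfiber _ hk]; exact hbpos k _ le_rfl⟩
  have hbE : ∀ i, b ⟨0, hg⟩ ⟨⟨0, hg⟩, i⟩ * ∑ j, e j = c ⟨⟨0, hg⟩, i⟩ * e i := fun i =>
    mul_eq_mul_of_qoExp_mul_eq (hc _) (by exact_mod_cast he i)
  have hcone := coneForm_rep_eq_zero_of_mem_qoLambda hc
    (fun k p => hbmono _ k p (Nat.zero_le _)) hlt hfiber hbE hf hℓ
  rw [coneForm, sub_eq_zero] at hcone
  convert hcone using 4
  push_cast [qoExp]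
  rfl

theorem qo_limits_contained_in_cone
    {g : ℕ} (hg : 0 < g) (m : Fin g → ℕ) (hm : ∀ k, 0 < m k)
    (b : Fin g → ((k : Fin g) × Fin (m k)) → ℕ)
    (c : ((k : Fin g) × Fin (m k)) → ℕ) (hc : ∀ p, 0 < c p)
    (hbpos : ∀ (k : Fin g) (p : (k : Fin g) × Fin (m k)), p.1 ≤ k → 0 < b k p)
    (hbzero : ∀ (k : Fin g) (p : (k : Fin g) × Fin (m k)), k < p.1 → b k p = 0)
    (hbmono : ∀ (k k' : Fin g) (p : (k : Fin g) × Fin (m k)), k ≤ k' → b k p ≤ b k' p)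
    (f : Fin g → (((k : Fin g) × Fin (m k)) → ℂ) → ℂ)
    (hf : ∀ k, AnalyticAt ℂ (f k) 0) (hf0 : ∀ k, f k 0 ≠ 0)
    (heq : ∑ j : Fin (m ⟨0, hg⟩), qoExp m b c ⟨0, hg⟩ ⟨⟨0, hg⟩, j⟩ = 1)
    (e : Fin (m ⟨0, hg⟩) → ℕ) (hepos : ∀ i, 0 < e i) (hgcd : Finset.univ.gcd e = 1)
    (he : ∀ i, qoExp m b c ⟨0, hg⟩ ⟨⟨0, hg⟩, i⟩ * (∑ j, (e j : ℚ)) = (e i : ℚ))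
 :
    ∀ ℓ ∈ qoLambda m b c f,
      ∏ i : Fin (m ⟨0, hg⟩), ℓ.rep.1 ⟨⟨0, hg⟩, i⟩ ^ e i =
        (-1) ^ (∑ j, e j) * f ⟨0, hg⟩ 0 ^ (∑ j, e j) *
          (∏ j : Fin (m ⟨0, hg⟩), ((qoExp m b c ⟨0, hg⟩ ⟨⟨0, hg⟩, j⟩ : ℚ) : ℂ) ^ e j) *
          ℓ.rep.2 ^ (∑ j, e j) :=
  qo_limits_contained_in_cone_general hg m hm b c hc hbpos hbzero hbmono f hf e he
end
end

section
/- In the quasi-ordinary setup below, assume ∑_{i=1}^{m_1} a_{11i} < 1. Then there exists r_0 > 0 such that for all 0 < r ≤ r_0 the tangent cone of Y_r at 0 equals {(x, y) ∈ ℂ^n × ℂ : ∏_{j=1}^{m_1} x_{1j} = 0}, where x = (x_{kj})_{k,j}. -/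
/-!
Over the first level, `φ = M₁ · F` with `F(0) = f₁(0) ≠ 0`, so `Y_r` is the image of the polydisc
under `t ↦ ((t_p ^ c_p)_p, (∏ t_p ^ β_p) · F t)` with `β = b₁` and `σ = ∑ β_p / c_p < 1`.

If `s • Φ(t) → v` with `|s| → ∞` and `v_p ≠ 0` wherever `β_p ≠ 0`, then
`|s · φ(t)| = |s| ^ (1 - σ) · ∏ |s · t_p ^ c_p| ^ (β_p / c_p) · |F t| → ∞`, so `v` is not
tangent.

Conversely, if `v_{p₀} = 0` for some `p₀` with `β_{p₀} ≠ 0`, use the curve `t_p(s) = z_p s^(-x_p)`,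
`s → ∞`, with `c_p x_p = 1` where `v_p ≠ 0`, `c_p x_p > 1` where `v_p = 0`, and `∑ β_p x_p = 1`:
then `s · t_p ^ c_p → v_p` and `s · φ(t(s)) = (∏ z_p ^ β_p) · F(t(s))`, which tends to `v.2` for a
suitable `z`. Such `x` exist because `σ < 1` leaves room to raise `x_{p₀}`.
-/

open Filter Topology

noncomputable section

/-- The image `Y_r` of the polydisc of radius `r` under `t ↦ ((t_{kj}^{c_{kj}})_{kj}, φ(t))`. -/
def qoY {g : ℕ} (m : Fin g → ℕ) (b : Fin g → ((k : Fin g) × Fin (m k)) → ℕ)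
    (c : ((k : Fin g) × Fin (m k)) → ℕ)
    (f : Fin g → (((k : Fin g) × Fin (m k)) → ℂ) → ℂ) (r : ℝ) :
    Set ((((k : Fin g) × Fin (m k)) → ℂ) × ℂ) :=
  (fun t => (fun p => t p ^ c p, qoPhi m b f t)) '' {t | ∀ p, ‖t p‖ < r}


open Asymptotics

theorem exists_seq_of_mem_tangentConeAt_image {𝕜 E α : Type*} [NontriviallyNormedField 𝕜]
    [NormedAddCommGroup E] [NormedSpace 𝕜 E] {φ : α → E} {s : Set α} {y : E}
    (h : y ∈ tangentConeAt 𝕜 (φ '' s) 0) :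
    ∃ (c : ℕ → 𝕜) (a : ℕ → α), Tendsto (‖c ·‖) atTop atTop ∧ (∀ n, a n ∈ s) ∧
      Tendsto (fun n => c n • φ (a n)) atTop (𝓝 y) := by
  obtain ⟨c, d, hc, hds, hcd⟩ := mem_tangentConeAt_iff_exists_seq_norm_tendsto_atTop.mp h
  obtain ⟨N, hN⟩ := eventually_atTop.mp hds
  choose a ha hφa using fun n => zero_add (d (n + N)) ▸ hN (n + N) (Nat.le_add_left N n)
  refine ⟨fun n => c (n + N), a, (tendsto_add_atTop_iff_nat N).mpr hc, ha, ?_⟩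
  simpa only [hφa] using (tendsto_add_atTop_iff_nat N).mpr hcd

theorem tendsto_nhds_zero_of_tendsto_pow {α 𝕜 : Type*} [NormedDivisionRing 𝕜] {l : Filter α}
    {u : α → 𝕜} {n : ℕ} (hn : n ≠ 0) (h : Tendsto (fun x => u x ^ n) l (𝓝 0)) :
    Tendsto u l (𝓝 0) := by
  have hpow : (u ^ n) =o[l] ((fun _ => (1 : 𝕜)) ^ n) := by
    simpa only [Pi.pow_def, one_pow, isLittleO_one_iff] using h
  exact (isLittleO_one_iff 𝕜).mp (hpow.of_pow hn)

theorem mul_ofReal_rpow_pow (z : ℂ) {s : ℝ} (hs : 0 ≤ s) (a : ℝ) (n : ℕ) :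
    (z * ((s ^ a : ℝ) : ℂ)) ^ n = z ^ n * ((s ^ (n * a) : ℝ) : ℂ) := by
  rw [mul_pow, ← Complex.ofReal_pow, ← Real.rpow_natCast, ← Real.rpow_mul hs, mul_comm a]

section RamifiedGraph

variable {ι : Type*} [Fintype ι] {c β : ι → ℕ}

def ramifiedGraph (c : ι → ℕ) (ψ : (ι → ℂ) → ℂ) (r : ℝ) : Set ((ι → ℂ) × ℂ) :=
  (fun t => (fun p => t p ^ c p, ψ t)) '' {t | ∀ p, ‖t p‖ < r}

theorem norm_mul_prod_pow_eq (hc : ∀ p, 0 < c p) {C : ℂ} (hC : C ≠ 0) (t : ι → ℂ) :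
    ‖C * ∏ p, t p ^ β p‖ =
      ‖C‖ ^ (1 - ∑ p, (β p : ℝ) / c p) * ∏ p, ‖C * t p ^ c p‖ ^ ((β p : ℝ) / c p) := by
  have hC' : 0 < ‖C‖ := norm_pos_iff.mpr hC
  have hfactor : ∀ p, ‖C * t p ^ c p‖ ^ ((β p : ℝ) / c p) =
      ‖C‖ ^ ((β p : ℝ) / c p) * ‖t p‖ ^ β p := fun p => by
    rw [norm_mul, norm_pow, Real.mul_rpow hC'.le (by positivity),
      ← Real.rpow_natCast_mul (norm_nonneg _),
      mul_div_cancel₀ _ (by exact_mod_cast (hc p).ne'), Real.rpow_natCast]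
  rw [Finset.prod_congr rfl fun p _ => hfactor p, Finset.prod_mul_distrib,
    ← Real.rpow_sum_of_pos hC', ← mul_assoc, ← Real.rpow_add hC', sub_add_cancel,
    Real.rpow_one, norm_mul, norm_prod]
  simp only [norm_pow]

theorem tendsto_norm_mul_prod_pow_atTop {α : Type*} {l : Filter α} (hc : ∀ p, 0 < c p)
    (hσ : ∑ p, (β p : ℝ) / c p < 1) {C : α → ℂ} (hC : Tendsto (‖C ·‖) l atTop)
    {t : α → ι → ℂ} {u : ι → ℂ} (hu : ∀ p, β p ≠ 0 → u p ≠ 0)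
    (ht : ∀ p, Tendsto (fun x => C x * t x p ^ c p) l (𝓝 (u p))) :
    Tendsto (fun x => ‖C x * ∏ p, t x p ^ β p‖) l atTop := by
  have hlim : Tendsto (fun x => ∏ p, ‖C x * t x p ^ c p‖ ^ ((β p : ℝ) / c p)) l
      (𝓝 (∏ p, ‖u p‖ ^ ((β p : ℝ) / c p))) :=
    tendsto_finsetProd _ fun p _ => (ht p).norm.rpow_const (Or.inr (by positivity))
  have hpos : 0 < ∏ p, ‖u p‖ ^ ((β p : ℝ) / c p) := Finset.prod_pos fun p _ => by
    rcases eq_or_ne (β p) 0 with h | h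
    · simp [h]
    · exact Real.rpow_pos_of_pos (norm_pos_iff.mpr (hu p h)) _
  refine (((tendsto_rpow_atTop (sub_pos.mpr hσ)).comp hC).atTop_mul_pos hpos hlim).congr' ?_
  filter_upwards [hC.eventually_gt_atTop 0] with x hx
  exact (norm_mul_prod_pow_eq hc (norm_pos_iff.mp hx) (t x)).symm

theorem tangentConeAt_ramifiedGraph_subset (hc : ∀ p, 0 < c p)
    (hσ : ∑ p, (β p : ℝ) / c p < 1) {ψ F : (ι → ℂ) → ℂ}
    (hψ : ∀ t, ψ t = (∏ p, t p ^ β p) * F t) (hF : ContinuousAt F 0) (hF0 : F 0 ≠ 0) (r : ℝ) :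
    tangentConeAt ℂ (ramifiedGraph c ψ r) 0 ⊆ {q | ∃ p, β p ≠ 0 ∧ q.1 p = 0} := by
  intro v hv
  by_contra hv1
  simp only [Set.mem_ofPred_eq, not_exists, not_and] at hv1
  obtain ⟨C, t, hC, -, hCt⟩ := exists_seq_of_mem_tangentConeAt_image hv
  have ht0 : Tendsto t atTop (𝓝 0) := by
    have hpow := (tangentConeAt.lim_zero atTop hC hCt).fst_nhds
    exact tendsto_pi_nhds.mpr fun p =>
      tendsto_nhds_zero_of_tendsto_pow (hc p).ne' (tendsto_pi_nhds.mp hpow p)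
  have hfst : ∀ p, Tendsto (fun n => C n * t n p ^ c p) atTop (𝓝 (v.1 p)) :=
    tendsto_pi_nhds.mp hCt.fst_nhds
  have hdiv : Tendsto (fun n => ‖C n * ψ (t n)‖) atTop atTop := by
    simp only [hψ, ← mul_assoc, norm_mul (_ : ℂ) (F _)]
    exact (tendsto_norm_mul_prod_pow_atTop hc hσ hC hv1 hfst).atTop_mul_pos
      (norm_pos_iff.mpr hF0) (hF.tendsto.comp ht0).norm
  exact not_tendsto_atTop_of_tendsto_nhds hCt.snd_nhds.norm hdiv

theorem exists_monomial_curve_exponents (hc : ∀ p, 0 < c p) (hσ : ∑ p, (β p : ℝ) / c p < 1)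
    (Z : Set ι) {p₀ : ι} (hp₀ : p₀ ∈ Z) (hβ₀ : β p₀ ≠ 0) :
    ∃ x : ι → ℝ, (∀ p, 0 < x p) ∧ ∑ p, β p * x p = 1 ∧
      ∀ p, (p ∉ Z → c p * x p = 1) ∧ (p ∈ Z → 1 < c p * x p) := by
  classical
  set σ := ∑ p, (β p : ℝ) / c p
  have hσ0 : 0 ≤ σ := by positivity
  set ρ : ℝ := 2 / (1 + σ)
  have hρ : 1 < ρ := by rw [lt_div_iff₀ (by positivity)]; linarith
  have hρσ : ρ * σ < 1 := by rw [div_mul_eq_mul_div, div_lt_one (by positivity)]; linarith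
  set y : ι → ℝ := fun p => (if p ∈ Z then ρ else 1) / c p
  have hy : ∀ p, 0 < y p := fun p => div_pos (by split_ifs <;> linarith) (by exact_mod_cast hc p)
  have hcy : ∀ p, c p * y p = if p ∈ Z then ρ else 1 := fun p =>
    mul_div_cancel₀ _ (by exact_mod_cast (hc p).ne')
  set T := ∑ p, β p * y p
  have hT : T < 1 := calc
    T ≤ ∑ p, ρ * ((β p : ℝ) / c p) := Finset.sum_le_sum fun p _ => by
        rw [mul_div_left_comm]
        gcongr
        split_ifs <;> linarith
    _ = ρ * σ := (Finset.mul_sum _ _ _).symm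
    _ < 1 := hρσ
  have hβ₀' : (0 : ℝ) < β p₀ := by exact_mod_cast Nat.pos_of_ne_zero hβ₀
  set a := (1 - T) / β p₀
  have ha : 0 < a := div_pos (by linarith) hβ₀'
  have hsingle : ∀ p, 0 ≤ (Pi.single p₀ a : ι → ℝ) p := fun p => by
    rw [Pi.single_apply]; split_ifs <;> positivity
  refine ⟨y + Pi.single p₀ a, fun p => add_pos_of_pos_of_nonneg (hy p) (hsingle p), ?_,
    fun p => ⟨fun hp => ?_, fun hp => ?_⟩⟩
  · have hβa : ∑ p, β p * (Pi.single p₀ a : ι → ℝ) p = β p₀ * a :=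
      (Fintype.sum_eq_single p₀ fun p hp => by simp [hp]).trans (by simp)
    simp only [Pi.add_apply, mul_add, Finset.sum_add_distrib, hβa]
    change T + β p₀ * ((1 - T) / β p₀) = 1
    rw [mul_div_cancel₀ _ hβ₀'.ne', add_sub_cancel]
  · have hne : p ≠ p₀ := fun h => hp (h ▸ hp₀)
    simp [hne, hcy, hp]
  · calc (1 : ℝ) < c p * y p := by simpa [hcy, hp] using hρ
      _ ≤ c p * (y + Pi.single p₀ a : ι → ℝ) p := by
        gcongr
        exact le_add_of_nonneg_right (hsingle p)

theorem exists_roots_prod_pow_eq (hc : ∀ p, 0 < c p) (u : ι → ℂ) (w : ℂ) {p₀ : ι}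
    (hu₀ : u p₀ = 0) (hβ₀ : β p₀ ≠ 0) :
    ∃ z : ι → ℂ, (∀ p, u p ≠ 0 → z p ^ c p = u p) ∧ ∏ p, z p ^ β p = w := by
  classical
  have hroot : ∀ p, ∃ y : ℂ, y ≠ 0 ∧ (u p ≠ 0 → y ^ c p = u p) := by
    intro p
    by_cases hp : u p = 0
    · exact ⟨1, one_ne_zero, fun h => absurd hp h⟩
    · obtain ⟨y, hy⟩ := IsAlgClosed.exists_pow_nat_eq (u p) (hc p)
      exact ⟨y, by rintro rfl; exact hp (by simp [← hy, (hc p).ne']), fun _ => hy⟩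
  choose y hy0 hyu using hroot
  obtain ⟨ω, hω⟩ := IsAlgClosed.exists_pow_nat_eq (w / ∏ p, y p ^ β p) (Nat.pos_of_ne_zero hβ₀)
  refine ⟨y * Pi.mulSingle p₀ ω, fun p hp => ?_, ?_⟩
  · have : p ≠ p₀ := by rintro rfl; exact hp hu₀
    simp [Pi.mulSingle_eq_of_ne this, hyu p hp]
  · have hsingle : ∏ p, Pi.mulSingle p₀ ω p ^ β p = ω ^ β p₀ :=
      (Fintype.prod_eq_single p₀ fun p hp => by simp [Pi.mulSingle_eq_of_ne hp]).trans (by simp)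
    simp only [Pi.mul_apply, mul_pow, Finset.prod_mul_distrib]
    rw [hsingle, hω,
      mul_div_cancel₀ _ (Finset.prod_ne_zero_iff.mpr fun p _ => pow_ne_zero _ (hy0 p))]

theorem mem_tangentConeAt_ramifiedGraph_of_monomial_curve {ψ F : (ι → ℂ) → ℂ}
    (hψ : ∀ t, ψ t = (∏ p, t p ^ β p) * F t) (hF : ContinuousAt F 0) {r : ℝ} (hr : 0 < r)
    {x : ι → ℝ} (hx : ∀ p, 0 < x p) (hβx : ∑ p, β p * x p = 1) {z : ι → ℂ}
    {v : (ι → ℂ) × ℂ}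
    (hv1 : ∀ p, (c p * x p = 1 ∧ z p ^ c p = v.1 p) ∨ (1 < c p * x p ∧ v.1 p = 0))
    (hv2 : (∏ p, z p ^ β p) * F 0 = v.2) :
    v ∈ tangentConeAt ℂ (ramifiedGraph c ψ r) 0 := by
  set γ : ℝ → ι → ℂ := fun s p => z p * ((s ^ (-x p) : ℝ) : ℂ)
  have hγ0 : Tendsto γ atTop (𝓝 0) := tendsto_pi_nhds.mpr fun p => by
    simpa using ((Complex.continuous_ofReal.tendsto 0).comp
      (tendsto_rpow_neg_atTop (hx p))).const_mul (z p)
  have hfst : ∀ p, Tendsto (fun s : ℝ => (s : ℂ) * γ s p ^ c p) atTop (𝓝 (v.1 p)) := by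
    intro p
    have hγ : ∀ᶠ s : ℝ in atTop,
        z p ^ c p * ((s ^ (1 - c p * x p) : ℝ) : ℂ) = (s : ℂ) * γ s p ^ c p := by
      filter_upwards [eventually_gt_atTop 0] with s hs
      rw [mul_ofReal_rpow_pow _ hs.le, mul_left_comm, ← Complex.ofReal_mul, sub_eq_add_neg,
        Real.rpow_add hs, Real.rpow_one, mul_neg]
    refine Tendsto.congr' hγ ?_
    rcases hv1 p with ⟨hcx, hzv⟩ | ⟨hcx, hv0⟩
    · simp [hcx, hzv]
    · have h := (Complex.continuous_ofReal.tendsto 0).comp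
        (tendsto_rpow_neg_atTop (show 0 < c p * x p - 1 by linarith))
      simpa [hv0] using h.const_mul (z p ^ c p)
  have hsnd : Tendsto (fun s : ℝ => (s : ℂ) * ψ (γ s)) atTop (𝓝 v.2) := by
    have hγ : ∀ᶠ s : ℝ in atTop,
        (∏ p, z p ^ β p) * F (γ s) = (s : ℂ) * ψ (γ s) := by
      filter_upwards [eventually_gt_atTop 0] with s hs
      rw [hψ, Finset.prod_congr rfl fun p _ => mul_ofReal_rpow_pow _ hs.le _ _,
        Finset.prod_mul_distrib, ← Complex.ofReal_prod, ← Real.rpow_sum_of_pos hs]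
      have hs' : (s : ℂ) ≠ 0 := by exact_mod_cast hs.ne'
      simp only [mul_neg, Finset.sum_neg_distrib, hβx, Real.rpow_neg_one, Complex.ofReal_inv]
      field_simp
    rw [← hv2]
    exact ((hF.tendsto.comp hγ0).const_mul _).congr' hγ
  have hcd := (tendsto_pi_nhds.mpr hfst).prodMk_nhds hsnd
  have hs : Tendsto (fun s : ℝ => ‖(s : ℂ)‖) atTop atTop :=
    tendsto_abs_atTop_atTop.congr fun s => (Complex.norm_real s).symm
  refine mem_tangentConeAt_of_seq atTop (fun s : ℝ => (s : ℂ))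
    (fun s => ((fun p => γ s p ^ c p), ψ (γ s))) (tangentConeAt.lim_zero atTop hs hcd) ?_ hcd
  filter_upwards [hγ0 (Metric.ball_mem_nhds 0 hr)] with s hs
  rw [zero_add]
  exact ⟨γ s, (pi_norm_lt_iff hr).mp (mem_ball_zero_iff.mp hs), rfl⟩

theorem tangentConeAt_ramifiedGraph (hc : ∀ p, 0 < c p)
    (hσ : ∑ p, (β p : ℝ) / c p < 1) {ψ F : (ι → ℂ) → ℂ}
    (hψ : ∀ t, ψ t = (∏ p, t p ^ β p) * F t) (hF : ContinuousAt F 0) (hF0 : F 0 ≠ 0)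
    {r : ℝ} (hr : 0 < r) :
    tangentConeAt ℂ (ramifiedGraph c ψ r) 0 = {q | ∃ p, β p ≠ 0 ∧ q.1 p = 0} := by
  refine (tangentConeAt_ramifiedGraph_subset hc hσ hψ hF hF0 r).antisymm ?_
  rintro v ⟨p₀, hβ₀, hv₀⟩
  obtain ⟨x, hx, hβx, hcx⟩ := exists_monomial_curve_exponents hc hσ {p | v.1 p = 0} hv₀ hβ₀
  obtain ⟨z, hz, hzβ⟩ := exists_roots_prod_pow_eq hc v.1 (v.2 / F 0) hv₀ hβ₀
  refine mem_tangentConeAt_ramifiedGraph_of_monomial_curve hψ hF hr hx hβx (fun p => ?_)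
    (by rw [hzβ, div_mul_cancel₀ _ hF0])
  by_cases hp : v.1 p = 0
  · exact Or.inr ⟨(hcx p).2 hp, hp⟩
  · exact Or.inl ⟨(hcx p).1 hp, hz p hp⟩

end RamifiedGraph

-- `∑ₖ (M_k / M_{k₀}) f_k`; the truncated subtraction is exact when `M_{k₀} ∣ M_k`.
def qoCofactor {g : ℕ} (m : Fin g → ℕ) (b : Fin g → ((k : Fin g) × Fin (m k)) → ℕ)
    (k₀ : Fin g) (f : Fin g → (((k : Fin g) × Fin (m k)) → ℂ) → ℂ)
    (t : ((k : Fin g) × Fin (m k)) → ℂ) : ℂ :=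
  ∑ k, (∏ p, t p ^ (b k p - b k₀ p)) * f k t

section QuasiOrdinary

variable {g : ℕ} {m : Fin g → ℕ} {b : Fin g → ((k : Fin g) × Fin (m k)) → ℕ} {k₀ : Fin g}
  {f : Fin g → (((k : Fin g) × Fin (m k)) → ℂ) → ℂ}

theorem qoPhi_eq_prod_pow_mul_qoCofactor (hmono : ∀ k p, b k₀ p ≤ b k p)
    (t : ((k : Fin g) × Fin (m k)) → ℂ) :
    qoPhi m b f t = (∏ p, t p ^ b k₀ p) * qoCofactor m b k₀ f t := by
  rw [qoPhi, qoCofactor, Finset.mul_sum]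
  refine Finset.sum_congr rfl fun k _ => ?_
  rw [← mul_assoc, qoMonom, ← Finset.prod_mul_distrib]
  congr 1
  exact Finset.prod_congr rfl fun p _ => by rw [← pow_add, Nat.add_sub_cancel' (hmono k p)]

theorem qoCofactor_zero (hlt : ∀ k ≠ k₀, ∃ p, b k₀ p < b k p) :
    qoCofactor m b k₀ f 0 = f k₀ 0 := by
  rw [qoCofactor, Fintype.sum_eq_single k₀]
  · simp
  · intro k hk
    obtain ⟨p, hp⟩ := hlt k hk
    rw [Finset.prod_eq_zero (Finset.mem_univ p) (by simp [Nat.sub_ne_zero_of_lt hp]), zero_mul]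

theorem continuousAt_qoCofactor (hf : ∀ k, ContinuousAt (f k) 0) :
    ContinuousAt (qoCofactor m b k₀ f) 0 :=
  tendsto_finsetSum _ fun k _ => (Continuous.continuousAt (by fun_prop)).mul (hf k)

end QuasiOrdinary

theorem qo_tangent_cone_of_sum_lt_one
    {g : ℕ} (hg : 0 < g) (m : Fin g → ℕ) (hm : ∀ k, 0 < m k)
    (b : Fin g → ((k : Fin g) × Fin (m k)) → ℕ)
    (c : ((k : Fin g) × Fin (m k)) → ℕ) (hc : ∀ p, 0 < c p)
    (hbpos : ∀ (k : Fin g) (p : (k : Fin g) × Fin (m k)), p.1 ≤ k → 0 < b k p)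
    (hbzero : ∀ (k : Fin g) (p : (k : Fin g) × Fin (m k)), k < p.1 → b k p = 0)
    (hbmono : ∀ (k k' : Fin g) (p : (k : Fin g) × Fin (m k)), k ≤ k' → b k p ≤ b k' p)
    (f : Fin g → (((k : Fin g) × Fin (m k)) → ℂ) → ℂ)
    (hf : ∀ k, AnalyticAt ℂ (f k) 0) (hf0 : ∀ k, f k 0 ≠ 0)
    (hlt : ∑ j : Fin (m ⟨0, hg⟩), qoExp m b c ⟨0, hg⟩ ⟨⟨0, hg⟩, j⟩ < 1) :
    ∃ r₀ > (0 : ℝ), ∀ r : ℝ, 0 < r → r ≤ r₀ →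
      tangentConeAt ℂ (qoY m b c f r) 0 =
        {q : (((k : Fin g) × Fin (m k)) → ℂ) × ℂ |
          ∏ j : Fin (m ⟨0, hg⟩), q.1 ⟨⟨0, hg⟩, j⟩ = 0} := by
  set k₀ : Fin g := ⟨0, hg⟩
  have hk₀ : ∀ k, k₀ ≤ k := fun k => Fin.le_iff_val_le_val.mpr (Nat.zero_le _)
  have hb₀ : ∀ p : (k : Fin g) × Fin (m k), p.1 ≠ k₀ → b k₀ p = 0 := fun p hp =>
    hbzero k₀ p (lt_of_le_of_ne (hk₀ _) (Ne.symm hp))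
  have hsupp : ∀ p : (k : Fin g) × Fin (m k), b k₀ p ≠ 0 ↔ p.1 = k₀ := fun p =>
    ⟨not_imp_comm.mp (hb₀ p), fun hp => (hbpos k₀ p hp.le).ne'⟩
  have hσ : ∑ p, (b k₀ p : ℝ) / c p < 1 := by
    rw [Fintype.sum_sigma, Fintype.sum_eq_single k₀ fun k hk =>
      Finset.sum_eq_zero fun j _ => by simp [hb₀ ⟨k, j⟩ hk]]
    simpa [qoExp] using (Rat.cast_lt (K := ℝ)).mpr hlt
  have hF0 : qoCofactor m b k₀ f 0 ≠ 0 := by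
    rw [qoCofactor_zero fun k hk => ⟨⟨k, ⟨0, hm k⟩⟩, ?_⟩]
    · exact hf0 k₀
    · rw [hb₀ _ hk]
      exact hbpos k _ le_rfl
  refine ⟨1, one_pos, fun r hr _ => ?_⟩
  refine (tangentConeAt_ramifiedGraph hc hσ
    (qoPhi_eq_prod_pow_mul_qoCofactor fun k p => hbmono k₀ k p (hk₀ k))
    (continuousAt_qoCofactor fun k => (hf k).continuousAt) hF0 hr).trans ?_
  ext q
  simp [hsupp, Finset.prod_eq_zero_iff]

end
end

section
/- In the quasi-ordinary setup below, assume ∑_{i=1}^{m_1} a_{11i} > 1. Then there exists r_0 > 0 such that for all 0 < r ≤ r_0 the tangent cone of Y_r at 0 equals the hyperplane {(x, y) ∈ ℂ^n × ℂ : y = 0}. -/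
open Filter Topology

noncomputable section

/-! Near `0` each `M_k` is dominated by `M_1` and the `f_k` are bounded, so with `x = (t^c)`
and `A = ∑ a_{11j} > 1` we get `|φ(t)| ≲ |M_1(t)| ≤ ‖x‖^A = o(‖x‖)`. Thus on `Y_r` the last
coordinate is `o` of the others, which confines the tangent cone to `{y = 0}`. Conversely, every
small `x` is `t^c` for some `t` in the polydisc, and a section `x ↦ (x, φ(t))` of the projection
is differentiable at `0` with derivative `x ↦ (x, 0)`, so it carries every direction into the
tangent cone of `Y_r`. -/

open Asymptotics Set

section TangentCone

variable {𝕜 E F : Type*} [NontriviallyNormedField 𝕜] [NormedAddCommGroup E]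
  [NormedSpace 𝕜 E] [NormedAddCommGroup F] [NormedSpace 𝕜 F] {S : Set (E × F)}

theorem tangentConeAt_subset_setOf_snd_eq_zero (h : Prod.snd =o[𝓝[S] 0] Prod.fst) :
    tangentConeAt 𝕜 S 0 ⊆ {q | q.2 = 0} := by
  have hsnd : HasFDerivWithinAt (Prod.snd : E × F → F) (0 : E × F →L[𝕜] F) S 0 := by
    refine .of_isLittleO ?_
    simp only [Prod.snd_zero, sub_zero, zero_apply]
    exact h.trans_isBigO isBigO_fst_prod'
  exact fun v hv => (hsnd.unique_on hasFDerivWithinAt_snd hv).symm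

theorem setOf_snd_eq_zero_subset_tangentConeAt (hS : Prod.fst '' S ∈ 𝓝 0)
    (h : Prod.snd =o[comap Prod.fst (𝓝 0) ⊓ 𝓟 S] Prod.fst) :
    {q | q.2 = 0} ⊆ tangentConeAt 𝕜 S 0 := by
  choose! σ hσS hσfst using fun (x : E) (hx : x ∈ Prod.fst '' S) => hx
  have hσ : Tendsto σ (𝓝[Prod.fst '' S] 0) (comap Prod.fst (𝓝 0) ⊓ 𝓟 S) := by
    refine tendsto_inf.2 ⟨tendsto_comap_iff.2 ?_, tendsto_principal.2 ?_⟩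
    · exact tendsto_nhdsWithin_of_tendsto_nhds tendsto_id |>.congr'
        (eventually_nhdsWithin_of_forall fun x hx => (hσfst x hx).symm)
    · exact eventually_nhdsWithin_of_forall hσS
  have hσsnd : (fun x => (σ x).2) =o[𝓝[Prod.fst '' S] 0] id :=
    (h.comp_tendsto hσ).congr' .rfl (eventually_nhdsWithin_of_forall hσfst)
  have hσ0 : σ 0 = 0 := by
    have h0S : (0 : E) ∈ Prod.fst '' S := mem_of_mem_nhds hS
    exact Prod.ext (hσfst 0 h0S) (isLittleO_pure (f'' := fun x => (σ x).2) (g'' := id).1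
      (hσsnd.mono (pure_le_nhdsWithin h0S)))
  have hσd : HasFDerivWithinAt σ (ContinuousLinearMap.inl 𝕜 E F) (Prod.fst '' S) 0 := by
    refine .of_isLittleO ?_
    rw [hσ0]
    refine (isLittleO_zero _ _ |>.prod_left hσsnd).congr' ?_ (by simp only [sub_zero]; rfl)
    filter_upwards [self_mem_nhdsWithin] with x hx
    simp [Prod.ext_iff, hσfst x hx]
  rintro ⟨x, y⟩ (rfl : y = 0)
  have := hσd.mapsTo_tangent_cone (by rw [tangentConeAt_of_mem_nhds hS]; trivial : x ∈ _)
  rw [hσ0] at this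
  exact tangentConeAt_mono (image_subset_iff.2 hσS) this

theorem tangentConeAt_eq_setOf_snd_eq_zero (hS : Prod.fst '' S ∈ 𝓝 0)
    (h : Prod.snd =o[comap Prod.fst (𝓝 0) ⊓ 𝓟 S] Prod.fst) :
    tangentConeAt 𝕜 S 0 = {q | q.2 = 0} := by
  refine (tangentConeAt_subset_setOf_snd_eq_zero (h.mono ?_)).antisymm
    (setOf_snd_eq_zero_subset_tangentConeAt hS h)
  exact inf_le_inf_right _ (continuous_fst.tendsto' 0 0 rfl).le_comap

end TangentCone

theorem Filter.comap_fst_inf_principal_range_le {α E F : Type*} (u : α → E) (v : α → F)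
    (l : Filter E) :
    comap Prod.fst l ⊓ 𝓟 (range fun a => (u a, v a)) ≤
      map (fun a => (u a, v a)) (comap u l) := by
  intro W hW
  obtain ⟨V, hV, hVW⟩ := mem_comap.1 (mem_map.1 hW)
  refine mem_inf_of_inter (preimage_mem_comap hV) (mem_principal_self _) ?_
  rintro _ ⟨hq, a, rfl⟩
  exact hVW hq

theorem Filter.Tendsto.of_pow_nhds_zero {α 𝕜 : Type*} [NormedDivisionRing 𝕜] {l : Filter α}
    {u : α → 𝕜} {n : ℕ} (h : Tendsto (fun a => u a ^ n) l (𝓝 0)) :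
    Tendsto u l (𝓝 0) := by
  refine Metric.tendsto_nhds.2 fun ε hε => ?_
  filter_upwards [Metric.tendsto_nhds.1 h (ε ^ n) (pow_pos hε n)] with a ha
  rw [dist_zero_right, norm_pow] at *
  exact lt_of_pow_lt_pow_left₀ n hε.le ha

theorem comap_pow_pi_nhds_zero_le {ι 𝕜 : Type*} [NormedDivisionRing 𝕜] (c : ι → ℕ) :
    comap (fun (t : ι → 𝕜) i => t i ^ c i) (𝓝 0) ≤ 𝓝 0 :=
  tendsto_id'.1 <| tendsto_pi_nhds.2 fun i => Tendsto.of_pow_nhds_zero (n := c i)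
    (tendsto_pi_nhds.1 (tendsto_comap (f := fun (t : ι → 𝕜) i => t i ^ c i)) i)

theorem isLittleO_norm_rpow_id {E : Type*} [SeminormedAddCommGroup E] {A : ℝ} (hA : 1 < A) :
    (fun x : E => ‖x‖ ^ A) =o[𝓝 0] id := by
  have hsmall : (fun x : E => ‖x‖ ^ (A - 1)) =o[𝓝 0] (fun _ => (1 : ℝ)) := by
    refine (isLittleO_one_iff ℝ).2 ?_
    simpa [Real.zero_rpow (sub_ne_zero.2 hA.ne')] using
      (continuous_norm.tendsto (0 : E)).rpow_const (Or.inr (sub_nonneg.2 hA.le))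
  refine isLittleO_norm_right.1 <|
    (hsmall.mul_isBigO (isBigO_refl (fun x : E => ‖x‖) _)).congr (fun x => ?_) fun x => one_mul _
  rw [← Real.rpow_add_one' (norm_nonneg x) (by linarith), sub_add_cancel]

theorem prod_pow_le_rpow_sum_div {ι : Type*} [Fintype ι] {x : ι → ℝ} (hx : ∀ i, 0 ≤ x i)
    (b c : ι → ℕ) (hc : ∀ i, c i ≠ 0) {R : ℝ} (hR : ∀ i, x i ^ c i ≤ R) :
    ∏ i, x i ^ b i ≤ R ^ ∑ i, (b i : ℝ) / c i := by
  rcases isEmpty_or_nonempty ι with hι | ⟨⟨i₀⟩⟩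
  · simp
  have hR0 : 0 ≤ R := (pow_nonneg (hx i₀) _).trans (hR i₀)
  rw [Real.rpow_sum_of_nonneg hR0 fun i _ => by positivity]
  refine Finset.prod_le_prod (fun i _ => pow_nonneg (hx i) _) fun i _ => ?_
  have hroot : x i ≤ R ^ (c i : ℝ)⁻¹ := by
    simpa [Real.pow_rpow_inv_natCast (hx i) (hc i)] using
      Real.rpow_le_rpow (pow_nonneg (hx i) _) (hR i) (inv_nonneg.2 (Nat.cast_nonneg (c i)))
  calc x i ^ b i ≤ (R ^ (c i : ℝ)⁻¹) ^ b i := pow_le_pow_left₀ (hx i) hroot _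
    _ = R ^ ((b i : ℝ) / c i) := by
      rw [← Real.rpow_natCast, ← Real.rpow_mul hR0, inv_mul_eq_div]

theorem image_pow_polydisc_mem_nhds {ι : Type*} [Finite ι] {c : ι → ℕ} (hc : ∀ i, c i ≠ 0)
    {r : ℝ} (hr : 0 < r) :
    (fun (t : ι → ℂ) i => t i ^ c i) '' {t | ∀ i, ‖t i‖ < r} ∈ 𝓝 0 := by
  refine mem_of_superset (set_pi_mem_nhds finite_univ fun i _ =>
    Metric.ball_mem_nhds (0 : ℂ) (pow_pos hr (c i))) fun x hx => ?_
  have hroot : ∀ i, (x i ^ (c i : ℂ)⁻¹) ^ c i = x i := fun i =>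
    Complex.cpow_nat_inv_pow _ (hc i)
  refine ⟨fun i => x i ^ (c i : ℂ)⁻¹, fun i => ?_, funext hroot⟩
  have hxi : ‖x i‖ < r ^ c i := by simpa using hx i trivial
  rw [← hroot i, norm_pow] at hxi
  exact lt_of_pow_lt_pow_left₀ _ hr.le hxi

section QuasiOrdinary

variable {g : ℕ} {m : Fin g → ℕ} {b : Fin g → ((k : Fin g) × Fin (m k)) → ℕ}
  {c : ((k : Fin g) × Fin (m k)) → ℕ} {f : Fin g → (((k : Fin g) × Fin (m k)) → ℂ) → ℂ}

theorem qoMonom_isBigO_qoMonom {k k₀ : Fin g} (hle : ∀ p, b k₀ p ≤ b k p) :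
    qoMonom m b k =O[𝓝 0] qoMonom m b k₀ := by
  refine .of_bound 1 ?_
  filter_upwards [Metric.ball_mem_nhds 0 one_pos] with t ht
  have htp : ∀ p, ‖t p‖ ≤ 1 := fun p =>
    (norm_le_pi_norm t p).trans (mem_ball_zero_iff.1 ht).le
  simp only [qoMonom, norm_prod, norm_pow, one_mul]
  exact Finset.prod_le_prod (fun p _ => by positivity) fun p _ =>
    pow_le_pow_of_le_one (norm_nonneg _) (htp p) (hle p)

theorem qoPhi_isBigO_qoMonom {k₀ : Fin g} (hle : ∀ k p, b k₀ p ≤ b k p)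
    (hf : ∀ k, ContinuousAt (f k) 0) : qoPhi m b f =O[𝓝 0] qoMonom m b k₀ := by
  refine IsBigO.fun_sum fun k _ => ?_
  simpa using (qoMonom_isBigO_qoMonom (hle k)).mul ((hf k).tendsto.isBigO_one ℂ)

theorem norm_qoMonom_le_rpow (hc : ∀ p, c p ≠ 0) (k₀ : Fin g)
    (t : ((k : Fin g) × Fin (m k)) → ℂ) :
    ‖qoMonom m b k₀ t‖ ≤ ‖fun p => t p ^ c p‖ ^ ∑ p, (b k₀ p : ℝ) / c p := by
  rw [qoMonom, norm_prod]
  simp_rw [norm_pow]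
  refine prod_pow_le_rpow_sum_div (fun p => norm_nonneg _) _ _ hc fun p => ?_
  simpa [norm_pow] using norm_le_pi_norm (fun p => t p ^ c p) p

theorem qoPhi_isLittleO_pow (hc : ∀ p, c p ≠ 0) {k₀ : Fin g} (hle : ∀ k p, b k₀ p ≤ b k p)
    (hf : ∀ k, ContinuousAt (f k) 0) (hA : 1 < ∑ p, (b k₀ p : ℝ) / c p) :
    qoPhi m b f =o[comap (fun t p => t p ^ c p) (𝓝 0)] fun t p => t p ^ c p :=
  calc qoPhi m b f =O[comap (fun t p => t p ^ c p) (𝓝 0)] qoMonom m b k₀ :=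
        (qoPhi_isBigO_qoMonom hle hf).mono (comap_pow_pi_nhds_zero_le c)
    _ =O[comap (fun t p => t p ^ c p) (𝓝 0)]
        fun t => ‖fun p => t p ^ c p‖ ^ ∑ p, (b k₀ p : ℝ) / c p :=
        .of_bound' (.of_forall fun t => (norm_qoMonom_le_rpow hc k₀ t).trans (le_abs_self _))
    _ =o[comap (fun t p => t p ^ c p) (𝓝 0)] fun t p => t p ^ c p :=
        (isLittleO_norm_rpow_id hA).comp_tendsto tendsto_comap

theorem qoY_snd_isLittleO_fst (hc : ∀ p, c p ≠ 0) {k₀ : Fin g} (hle : ∀ k p, b k₀ p ≤ b k p)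
    (hf : ∀ k, ContinuousAt (f k) 0) (hA : 1 < ∑ p, (b k₀ p : ℝ) / c p) (r : ℝ) :
    Prod.snd =o[comap Prod.fst (𝓝 0) ⊓ 𝓟 (qoY m b c f r)] Prod.fst := by
  refine (isLittleO_map (k := fun t => (fun p => t p ^ c p, qoPhi m b f t))).2
    (qoPhi_isLittleO_pow hc hle hf hA) |>.mono
    ((inf_le_inf_left _ (principal_mono.2 (image_subset_range _ _))).trans ?_)
  exact comap_fst_inf_principal_range_le _ _ _

theorem cast_sum_qoExp_eq {k₀ : Fin g}
    (h : ∀ p : (k : Fin g) × Fin (m k), p.1 ≠ k₀ → b k₀ p = 0) :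
    ((∑ j, qoExp m b c k₀ ⟨k₀, j⟩ : ℚ) : ℝ) = ∑ p, (b k₀ p : ℝ) / c p := by
  rw [Fintype.sum_sigma, Fintype.sum_eq_single k₀ fun k hk =>
    Finset.sum_eq_zero fun j _ => by simp [h ⟨k, j⟩ hk]]
  push_cast [qoExp]
  rfl

end QuasiOrdinary

theorem qo_tangent_cone_of_sum_gt_one_general
    {g : ℕ} (hg : 0 < g) (m : Fin g → ℕ)
    (b : Fin g → ((k : Fin g) × Fin (m k)) → ℕ)
    (c : ((k : Fin g) × Fin (m k)) → ℕ) (hc : ∀ p, 0 < c p)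
    (hbzero : ∀ (k : Fin g) (p : (k : Fin g) × Fin (m k)), k < p.1 → b k p = 0)
    (hbmono : ∀ (k k' : Fin g) (p : (k : Fin g) × Fin (m k)), k ≤ k' → b k p ≤ b k' p)
    (f : Fin g → (((k : Fin g) × Fin (m k)) → ℂ) → ℂ)
    (hf : ∀ k, AnalyticAt ℂ (f k) 0)
    (hgt : 1 < ∑ j : Fin (m ⟨0, hg⟩), qoExp m b c ⟨0, hg⟩ ⟨⟨0, hg⟩, j⟩) :
    ∃ r₀ > (0 : ℝ), ∀ r : ℝ, 0 < r → r ≤ r₀ →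
      tangentConeAt ℂ (qoY m b c f r) 0 =
        {q : (((k : Fin g) × Fin (m k)) → ℂ) × ℂ | q.2 = 0} := by
  have hc' : ∀ p, c p ≠ 0 := fun p => (hc p).ne'
  have hA : 1 < ∑ p, (b ⟨0, hg⟩ p : ℝ) / c p := by
    rw [← cast_sum_qoExp_eq fun p hp => hbzero _ p (lt_of_le_of_ne (Nat.zero_le _) (Ne.symm hp))]
    exact_mod_cast hgt
  refine ⟨1, one_pos, fun r hr _ => tangentConeAt_eq_setOf_snd_eq_zero ?_ ?_⟩
  · rw [qoY, image_image]
    exact image_pow_polydisc_mem_nhds hc' hr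
  · exact qoY_snd_isLittleO_fst hc' (fun k p => hbmono _ k p (Nat.zero_le _))
      (fun k => (hf k).continuousAt) hA r

theorem qo_tangent_cone_of_sum_gt_one
    {g : ℕ} (hg : 0 < g) (m : Fin g → ℕ) (hm : ∀ k, 0 < m k)
    (b : Fin g → ((k : Fin g) × Fin (m k)) → ℕ)
    (c : ((k : Fin g) × Fin (m k)) → ℕ) (hc : ∀ p, 0 < c p)
    (hbpos : ∀ (k : Fin g) (p : (k : Fin g) × Fin (m k)), p.1 ≤ k → 0 < b k p)
    (hbzero : ∀ (k : Fin g) (p : (k : Fin g) × Fin (m k)), k < p.1 → b k p = 0)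
    (hbmono : ∀ (k k' : Fin g) (p : (k : Fin g) × Fin (m k)), k ≤ k' → b k p ≤ b k' p)
    (f : Fin g → (((k : Fin g) × Fin (m k)) → ℂ) → ℂ)
    (hf : ∀ k, AnalyticAt ℂ (f k) 0) (hf0 : ∀ k, f k 0 ≠ 0)
    (hgt : 1 < ∑ j : Fin (m ⟨0, hg⟩), qoExp m b c ⟨0, hg⟩ ⟨⟨0, hg⟩, j⟩) :
    ∃ r₀ > (0 : ℝ), ∀ r : ℝ, 0 < r → r ≤ r₀ →
      tangentConeAt ℂ (qoY m b c f r) 0 =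
        {q : (((k : Fin g) × Fin (m k)) → ℂ) × ℂ | q.2 = 0} :=
  qo_tangent_cone_of_sum_gt_one_general hg m b c hc hbzero hbmono f hf hgt

end
end
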